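/- arXiv:1202.6437 — 5 statements merged into one kernel-verified Lean document; each statement's English description precedes it below -/
import Mathlib

section
/- Every countable elementary amenable group H embeds (as a subgroup) into a finitely generated elementary amenable group G. -/
/-!
Enumerate `H` as `e : ℤ → H` and work in the unrestricted wreath product `(H ≀ ℤ²) ≀ ℤ`.
The element `rays e` has as `p`-th coordinate the ray of value `e p` along row `p` of `ℤ²`.
Conjugating it by the `m`-th power of the outer shift brings the ray of `e m` to coordinate `0`;
the commutator with the horizontal shift placed at coordinate `0` kills all other coordinates and
turns the ray into a single lamp `e m`, which the vertical shift moves to the origin. So four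
elements generate a group containing a copy of `H`.

Elementary amenability comes from the shape of the coordinates. Each coordinate lies in the tame
part of `H ≀ ℤ²` (finitely many nontrivial rows, each trivial far left and constant far right),
which is built from copies of `H` and `ℤ²` by extensions and directed unions; and all but finitely
many coordinates lie in the abelian group generated by the rays, so modulo finitely supported
functions the base group of the outer wreath product becomes abelian.
-/

universe u

/-- Groups obtained from a class `C` by applying one extension or one directed union. -/
def ObtainedByExtOrUnion (C : ∀ G : Type u, Group G → Prop)
    (G : Type u) (instG : Group G) : Prop :=
  letI := instG
  (∃ N : Subgroup G, ∃ _ : N.Normal, C ↥N inferInstance ∧ C (G ⧸ N) inferInstance) ∨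
  (∃ (ι : Type u) (K : ι → Subgroup G), Nonempty ι ∧ Directed (· ≤ ·) K ∧
      (∀ g : G, ∃ i, g ∈ K i) ∧ ∀ i, C ↥(K i) inferInstance)

/-- The transfinite hierarchy `EG_α`: `EG_0` consists of finite and abelian groups, at successor
stages one applies one extension or one directed union, and at limit stages one takes the union
of the previous stages. -/
noncomputable def EG : Ordinal.{u} → ∀ G : Type u, Group G → Prop := fun α =>
  Ordinal.limitRecOn (motive := fun _ => ∀ G : Type u, Group G → Prop) α
    (fun G _ => Finite G ∨ ∀ a b : G, a * b = b * a)
    (fun _ ih => ObtainedByExtOrUnion ih)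
    (fun o _ ih G instG => ∃ β, ∃ hβ : β < o, ih β hβ G instG)

/-- A group is elementary amenable if it lies in some `EG_α`. -/
def IsElementaryAmenable (G : Type u) [instG : Group G] : Prop := ∃ α, EG α G instG

/-- The elementary class `c(G)`: the least ordinal `α` with `G ∈ EG_α`. -/
noncomputable def elemClass (G : Type u) [instG : Group G] : Ordinal.{u} :=
  sInf {α | EG α G instG}

section Hierarchy

lemma EG_zero (G : Type u) (instG : Group G) :
    EG 0 G instG ↔ (Finite G ∨ ∀ a b : G, a * b = b * a) := by
  simp only [EG, Ordinal.limitRecOn_zero]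

lemma EG_succ (o : Ordinal.{u}) (G : Type u) (instG : Group G) :
    EG (Order.succ o) G instG ↔ ObtainedByExtOrUnion (EG o) G instG := by
  rw [Order.succ_eq_add_one, EG, Ordinal.limitRecOn_add_one]
  rfl

lemma EG_of_isSuccLimit {o : Ordinal.{u}} (ho : Order.IsSuccLimit o) (G : Type u)
    (instG : Group G) : EG o G instG ↔ ∃ β < o, EG β G instG := by
  rw [EG, Ordinal.limitRecOn_limit _ _ _ _ ho]
  simp only [exists_prop]
  rfl

lemma EG.of_mulEquiv (α : Ordinal.{u}) {G₁ G₂ : Type u} [inst₁ : Group G₁] [inst₂ : Group G₂]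
    (e : G₁ ≃* G₂) (h : EG α G₁ inst₁) : EG α G₂ inst₂ := by
  induction α using WellFoundedLT.induction generalizing G₁ G₂ with | _ α IH => ?_
  rcases Ordinal.zero_or_succ_or_isSuccLimit α with rfl | ⟨β, rfl⟩ | hα
  · rw [EG_zero] at h ⊢
    refine h.imp e.toEquiv.finite_iff.mp fun hc a b => ?_
    simpa using congrArg e (hc (e.symm a) (e.symm b))
  · have IHβ := @IH β (Order.lt_succ β)
    rw [EG_succ] at h ⊢
    rcases h with ⟨N, hN, hN₁, hN₂⟩ | ⟨ι, K, hι, hdir, hcov, hK⟩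
    · have hmap := Subgroup.map_equiv_eq_comap_symm e N
      refine Or.inl ⟨N.comap e.symm.toMonoidHom, hN.comap _, IHβ ?_ hN₁, IHβ ?_ hN₂⟩
      · exact (N.equivMapOfInjective e.toMonoidHom e.injective).trans
          (MulEquiv.subgroupCongr hmap)
      · exact QuotientGroup.congr N _ e hmap
    · refine Or.inr ⟨ι, fun i => (K i).map e.toMonoidHom, hι,
        hdir.mono_comp _ fun _ _ h => Subgroup.map_mono h, fun g => ?_,
        fun i => IHβ ((K i).equivMapOfInjective e.toMonoidHom e.injective) (hK i)⟩
      obtain ⟨i, hi⟩ := hcov (e.symm g)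
      exact ⟨i, e.symm g, hi, by simp⟩
  · rw [EG_of_isSuccLimit hα] at h ⊢
    obtain ⟨β, hβ, hG₁⟩ := h
    exact ⟨β, hβ, IH β hβ e hG₁⟩

lemma EG.mono {α β : Ordinal.{u}} (hαβ : α ≤ β) {G : Type u} [instG : Group G]
    (h : EG α G instG) : EG β G instG := by
  induction β using WellFoundedLT.induction with | _ β IH => ?_
  rcases hαβ.eq_or_lt with rfl | hlt
  · exact h
  rcases Ordinal.zero_or_succ_or_isSuccLimit β with rfl | ⟨γ, rfl⟩ | hβ
  · exact absurd hlt not_lt_zero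
  · have hγ := IH γ (Order.lt_succ γ) (Order.lt_succ_iff.mp hlt)
    rw [EG_succ]
    -- `G` is the directed union of the one-element family `⊤`
    exact Or.inr ⟨PUnit, fun _ => ⊤, inferInstance, directed_of_isDirected_le fun _ _ _ => le_rfl,
      fun g => ⟨PUnit.unit, Subgroup.mem_top g⟩,
      fun _ => EG.of_mulEquiv γ Subgroup.topEquiv.symm hγ⟩
  · exact (EG_of_isSuccLimit hβ G instG).mpr ⟨α, hlt, h⟩

end Hierarchy

namespace IsElementaryAmenable

variable {G P : Type u} [Group G] [Group P]

lemma of_mulEquiv (e : G ≃* P) (h : IsElementaryAmenable G) : IsElementaryAmenable P :=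
  h.imp fun α => EG.of_mulEquiv α e

lemma of_finite [Finite G] : IsElementaryAmenable G :=
  ⟨0, (EG_zero G _).mpr (Or.inl ‹_›)⟩

lemma of_comm (h : ∀ a b : G, a * b = b * a) : IsElementaryAmenable G :=
  ⟨0, (EG_zero G _).mpr (Or.inr h)⟩

lemma of_extension (N : Subgroup G) [hN : N.Normal] (h₁ : IsElementaryAmenable N)
    (h₂ : IsElementaryAmenable (G ⧸ N)) : IsElementaryAmenable G := by
  obtain ⟨α, hα⟩ := h₁
  obtain ⟨β, hβ⟩ := h₂
  exact ⟨Order.succ (α ⊔ β), (EG_succ _ G _).mpr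
    (Or.inl ⟨N, hN, hα.mono le_sup_left, hβ.mono le_sup_right⟩)⟩

lemma of_directed {ι : Type u} [hι : Nonempty ι] (K : ι → Subgroup G)
    (hdir : Directed (· ≤ ·) K) (hcov : ∀ g, ∃ i, g ∈ K i)
    (hK : ∀ i, IsElementaryAmenable (K i)) : IsElementaryAmenable G := by
  choose α hα using hK
  exact ⟨Order.succ (⨆ i, α i), (EG_succ _ G _).mpr
    (Or.inr ⟨ι, K, hι, hdir, hcov, fun i => (hα i).mono (Ordinal.le_iSup α i)⟩)⟩

end IsElementaryAmenable

lemma EG.isElementaryAmenable_of_injective (α : Ordinal.{u}) {G P : Type u} [Group G]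
    [instP : Group P] (hP : EG α P instP) (f : G →* P) (hf : Function.Injective f) :
    IsElementaryAmenable G := by
  induction α using WellFoundedLT.induction generalizing G P with | _ α IH => ?_
  rcases Ordinal.zero_or_succ_or_isSuccLimit α with rfl | ⟨β, rfl⟩ | hα
  · rw [EG_zero] at hP
    rcases hP with hfin | hcomm
    · have := Finite.of_injective f hf
      exact .of_finite
    · exact .of_comm fun a b => hf (by simpa using hcomm (f a) (f b))
  · have IHβ := @IH β (Order.lt_succ β)
    rw [EG_succ] at hP
    rcases hP with ⟨N, hN, hN₁, hN₂⟩ | ⟨ι, K, hι, hdir, hcov, hK⟩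
    · set g := (QuotientGroup.mk' N).comp f
      have hker : ∀ x : g.ker, f x ∈ N := fun x => (QuotientGroup.eq_one_iff _).mp x.2
      refine .of_extension g.ker (IHβ hN₁ ((f.comp g.ker.subtype).codRestrict N hker) ?_)
        (IHβ hN₂ (QuotientGroup.kerLift g) (QuotientGroup.kerLift_injective g))
      exact fun _ _ hxy => Subtype.ext (hf (congrArg Subtype.val hxy))
    · refine .of_directed (fun i => (K i).comap f) (hdir.mono_comp _ fun _ _ h =>
        Subgroup.comap_mono h) (fun g => (hcov (f g)).imp fun _ h => h) fun i => ?_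
      exact IHβ (hK i) (f.subgroupComap (K i)) fun _ _ hxy =>
        Subtype.ext (hf (congrArg Subtype.val hxy))
  · rw [EG_of_isSuccLimit hα] at hP
    obtain ⟨β, hβ, hP⟩ := hP
    exact IH β hβ hP f hf

namespace IsElementaryAmenable

variable {G P : Type u} [Group G] [Group P]

lemma of_injective (f : G →* P) (hf : Function.Injective f) (h : IsElementaryAmenable P) :
    IsElementaryAmenable G :=
  let ⟨α, hα⟩ := h
  EG.isElementaryAmenable_of_injective α hα f hf

lemma of_le {S T : Subgroup G} (hST : S ≤ T) (hT : IsElementaryAmenable T) :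
    IsElementaryAmenable S :=
  hT.of_injective (Subgroup.inclusion hST) (Subgroup.inclusion_injective hST)

lemma comap (f : G →* P) (hf : Function.Injective f) {T : Subgroup P}
    (hT : IsElementaryAmenable T) : IsElementaryAmenable (T.comap f) :=
  hT.of_injective (f.subgroupComap T) fun _ _ hxy => Subtype.ext (hf (congrArg Subtype.val hxy))

lemma sSup_of_directedOn {𝒦 : Set (Subgroup G)} (hne : 𝒦.Nonempty)
    (hdir : DirectedOn (· ≤ ·) 𝒦) (h𝒦 : ∀ K ∈ 𝒦, IsElementaryAmenable K) :
    IsElementaryAmenable ↥(sSup 𝒦) := by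
  have := hne.to_subtype
  refine of_directed (fun K : 𝒦 => K.1.subgroupOf (sSup 𝒦))
    (hdir.directed_val.mono_comp _ fun _ _ h => Subgroup.comap_mono h) (fun g => ?_)
    fun K => (h𝒦 K K.2).of_mulEquiv (Subgroup.subgroupOfEquivOfLe (le_sSup K.2)).symm
  obtain ⟨K, hK, hg⟩ := (Subgroup.mem_sSup_of_directedOn hne hdir).mp g.2
  exact ⟨⟨K, hK⟩, hg⟩

lemma ker_comp_subtype {A : Type u} [Group A] {Q : Type*} [Group Q] {S : Subgroup A}
    (f : A →* Q) (h : IsElementaryAmenable ↥(S ⊓ f.ker)) :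
    IsElementaryAmenable (f.comp S.subtype).ker :=
  h.of_injective ((S.subtype.comp (f.comp S.subtype).ker.subtype).codRestrict (S ⊓ f.ker)
    fun x => Subgroup.mem_inf.mpr ⟨x.1.2, x.2⟩) fun _ _ hxy => by
      ext
      exact (congrArg Subtype.val hxy :)

lemma of_inf_ker_of_map {A : Type u} [Group A] {S : Subgroup A} (f : A →* P)
    (hker : IsElementaryAmenable ↥(S ⊓ f.ker)) (hmap : IsElementaryAmenable ↥(S.map f)) :
    IsElementaryAmenable S := by
  have hrange : (f.comp S.subtype).range = S.map f := by
    rw [MonoidHom.range_comp, Subgroup.range_subtype]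
  exact of_extension _ (ker_comp_subtype f hker) (hmap.of_mulEquiv
    ((QuotientGroup.quotientKerEquivRange _).trans (MulEquiv.subgroupCongr hrange)).symm)

lemma of_inf_ker_of_commute {A : Type u} [Group A] {Q : Type*} [Group Q] {S : Subgroup A}
    (f : A →* Q) (hker : IsElementaryAmenable ↥(S ⊓ f.ker))
    (hcomm : ∀ x ∈ S, ∀ y ∈ S, Commute (f x) (f y)) : IsElementaryAmenable S := by
  refine of_extension _ (ker_comp_subtype f hker) (of_comm fun a b => ?_)
  refine QuotientGroup.kerLift_injective _ ?_
  induction a using QuotientGroup.induction_on with | H x => ?_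
  induction b using QuotientGroup.induction_on with | H y => ?_
  simpa [map_mul] using (hcomm x x.2 y y.2).eq

end IsElementaryAmenable

open Filter
open scoped commutatorElement

section PiEventually

variable {ι : Type} {C : Type u} [Group C]

def piEventually (l : Filter ι) (U V : Subgroup C) : Subgroup (ι → C) where
  carrier := {f | (∀ i, f i ∈ U) ∧ ∀ᶠ i in l, f i ∈ V}
  one_mem' := ⟨fun _ => one_mem U, .of_forall fun _ => one_mem V⟩
  mul_mem' ha hb :=
    ⟨fun i => mul_mem (ha.1 i) (hb.1 i), (ha.2.and hb.2).mono fun _ h => mul_mem h.1 h.2⟩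
  inv_mem' ha := ⟨fun i => inv_mem (ha.1 i), ha.2.mono fun _ h => inv_mem h⟩

variable {l : Filter ι} {U V : Subgroup C}

lemma piEventually_anti {l' : Filter ι} (h : l ≤ l') :
    piEventually l' U V ≤ piEventually l U V :=
  fun _ hf => ⟨hf.1, h hf.2⟩

lemma map_comp_mem_piEventually {ι' : Type} {l' : Filter ι'} {D : Type*} [Group D]
    {U' V' : Subgroup D} (ψ : C →* D) (hU : U ≤ U'.comap ψ) (hV : V ≤ V'.comap ψ)
    {e : ι' → ι} (he : Tendsto e l' l) {f : ι → C} (hf : f ∈ piEventually l U V) :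
    (fun i => ψ (f (e i))) ∈ piEventually l' U' V' :=
  ⟨fun i => hU (hf.1 (e i)), (he.eventually hf.2).mono fun _ h => hV h⟩

lemma mulSingle_mem_piEventually_cofinite [DecidableEq ι] (i : ι) {c : C} (hc : c ∈ U) :
    Pi.mulSingle i c ∈ piEventually cofinite U V := by
  refine ⟨fun j => ?_, (eventually_cofinite_ne i).mono fun j hj => ?_⟩
  · rcases eq_or_ne j i with rfl | hj
    · simpa using hc
    · simp [hj]
  · simp [hj]

lemma IsElementaryAmenable.piEventually_principal_bot [DecidableEq ι]
    (hU : IsElementaryAmenable U) (s : Finset ι) :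
    IsElementaryAmenable (piEventually (𝓟 (s : Set ι)ᶜ) U ⊥) := by
  induction s using Finset.induction_on with
  | empty =>
    have h1 : ∀ f ∈ piEventually (𝓟 ((∅ : Finset ι) : Set ι)ᶜ) U ⊥, f = 1 := fun f hf =>
      funext fun i => Subgroup.mem_bot.mp (eventually_principal.mp hf.2 i (by simp))
    have : Subsingleton (piEventually (𝓟 ((∅ : Finset ι) : Set ι)ᶜ) U ⊥) :=
      ⟨fun f g => Subtype.ext ((h1 f f.2).trans (h1 g g.2).symm)⟩
    exact .of_finite
  | insert a s ha IH =>
    refine .of_inf_ker_of_map (Pi.evalMonoidHom _ a) (.of_le ?_ IH) (.of_le ?_ hU)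
    · rintro f ⟨⟨hfU, hfs⟩, hfa⟩
      refine ⟨hfU, eventually_principal.mpr fun i hi => ?_⟩
      rcases eq_or_ne i a with rfl | hia
      · exact hfa
      · exact eventually_principal.mp hfs i (by simpa [hia] using hi)
    · rintro _ ⟨f, hf, rfl⟩
      exact hf.1 a

lemma IsElementaryAmenable.piEventually_cofinite_bot (hU : IsElementaryAmenable U) :
    IsElementaryAmenable (piEventually (cofinite : Filter ι) U ⊥) := by
  classical
  refine .of_le ?_ (.sSup_of_directedOn (Set.range_nonempty fun s : Finset ι =>
    piEventually (𝓟 (s : Set ι)ᶜ) U ⊥) ?_ ?_)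
  · intro f hf
    have hfin : {i | f i ∉ (⊥ : Subgroup C)}.Finite := eventually_cofinite.mp hf.2
    have hf' : f ∈ piEventually (𝓟 (hfin.toFinset : Set ι)ᶜ) U ⊥ :=
      ⟨hf.1, eventually_principal.mpr fun i hi => by simpa using hi⟩
    exact Subgroup.mem_sSup_of_mem (Set.mem_range_self hfin.toFinset) hf'
  · refine directedOn_range.mpr fun s t => ⟨s ∪ t, ?_, ?_⟩ <;>
      exact piEventually_anti (principal_mono.mpr (by simp))
  · rintro _ ⟨s, rfl⟩
    exact IsElementaryAmenable.piEventually_principal_bot hU s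

lemma IsElementaryAmenable.piEventually_cofinite [IsMulCommutative V]
    (hU : IsElementaryAmenable U) :
    IsElementaryAmenable (piEventually (cofinite : Filter ι) U V) := by
  refine .of_inf_ker_of_commute (Germ.coeMulHom cofinite)
    (.of_le ?_ hU.piEventually_cofinite_bot) ?_
  · rintro f ⟨hf, hf1⟩
    exact ⟨hf.1, (Germ.coe_eq.mp hf1).mono fun _ hi => Subgroup.mem_bot.mpr hi⟩
  · intro f hf g hg
    rw [Commute, SemiconjBy, ← map_mul, ← map_mul]
    exact Germ.coe_eq.mpr ((hf.2.and hg.2).mono fun _ h => setLike_mul_comm h.1 h.2)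

end PiEventually

section Rows

variable (H : Type u) [Group H]

def trivialAtBotConstAtTop : Subgroup (ℤ → H) where
  carrier := {f | (∀ᶠ n in atBot, f n = 1) ∧ ∃ c, ∀ᶠ n in atTop, f n = c}
  one_mem' := ⟨.of_forall fun _ => rfl, 1, .of_forall fun _ => rfl⟩
  mul_mem' := fun ⟨ha, c, hc⟩ ⟨hb, d, hd⟩ =>
    ⟨(ha.and hb).mono fun _ h => by simp [h.1, h.2],
      c * d, (hc.and hd).mono fun _ h => by simp [h.1, h.2]⟩
  inv_mem' := fun ⟨ha, c, hc⟩ =>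
    ⟨ha.mono fun _ h => by simp [h], c⁻¹, hc.mono fun _ h => by simp [h]⟩

variable {H}

lemma comp_sub_mem_trivialAtBotConstAtTop {f : ℤ → H} (hf : f ∈ trivialAtBotConstAtTop H)
    (a : ℤ) : (fun n => f (n - a)) ∈ trivialAtBotConstAtTop H :=
  ⟨(tendsto_atBot_add_const_right atBot (-a) tendsto_id).eventually hf.1,
    hf.2.imp fun _ hc => (tendsto_atTop_add_const_right atTop (-a) tendsto_id).eventually hc⟩

lemma IsElementaryAmenable.trivialAtBotConstAtTop (hH : IsElementaryAmenable H) :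
    IsElementaryAmenable (trivialAtBotConstAtTop H) := by
  have hconst : Function.Injective ((Germ.coeMulHom atTop).comp (Pi.constMonoidHom ℤ H)) :=
    fun _ _ h => Germ.const_inj.mp h
  refine .of_inf_ker_of_map (Germ.coeMulHom atTop)
    (.of_le ?_ (hH.of_mulEquiv Subgroup.topEquiv.symm).piEventually_cofinite_bot)
    (.of_le ?_ (hH.of_mulEquiv (MonoidHom.ofInjective hconst)))
  · rintro f ⟨⟨hbot, -⟩, htop⟩
    refine ⟨fun _ => Subgroup.mem_top _, ?_⟩
    rw [Int.cofinite_eq, eventually_sup]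
    exact ⟨hbot, Germ.coe_eq.mp htop⟩
  · rintro _ ⟨f, ⟨-, c, hc⟩, rfl⟩
    exact ⟨c, Germ.coe_eq.mpr (hc.mono fun _ h => h.symm)⟩

end Rows

namespace SemidirectProduct

variable {N G : Type*} [Group N] [Group G] {φ : G →* MulAut N}

def leftIn (T : Subgroup N) (hT : ∀ g, ∀ n ∈ T, φ g n ∈ T) : Subgroup (N ⋊[φ] G) where
  carrier := {x | x.left ∈ T}
  one_mem' := one_mem T
  mul_mem' {a b} ha hb := show (a * b).left ∈ T by
    rw [mul_left]
    exact mul_mem ha (hT _ _ hb)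
  inv_mem' {a} ha := show a⁻¹.left ∈ T by
    rw [inv_left]
    exact hT _ _ (inv_mem ha)

end SemidirectProduct

lemma IsElementaryAmenable.leftIn {N : Type u} {G : Type} [Group N] [CommGroup G]
    {φ : G →* MulAut N} {T : Subgroup N} (hT : ∀ g, ∀ n ∈ T, φ g n ∈ T)
    (hTea : IsElementaryAmenable T) : IsElementaryAmenable (SemidirectProduct.leftIn T hT) := by
  refine .of_inf_ker_of_commute SemidirectProduct.rightHom (.of_le ?_
    (hTea.of_mulEquiv (T.equivMapOfInjective _ SemidirectProduct.inl_injective)))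
    fun x _ y _ => Commute.all _ _
  rintro x ⟨hx, hx1⟩
  refine ⟨x.left, hx, SemidirectProduct.ext rfl ?_⟩
  simpa using hx1.symm

section Wreath

variable (A : Type) [AddCommGroup A] (C : Type u) [Group C]

def shiftAut : Multiplicative A →* MulAut (A → C) where
  toFun a :=
    { toFun := fun f x => f (x - a.toAdd)
      invFun := fun f x => f (x + a.toAdd)
      left_inv := fun f => by simp
      right_inv := fun f => by simp
      map_mul' := fun _ _ => rfl }
  map_one' := by ext; simp
  map_mul' a b := by ext; simp [sub_sub]

abbrev WreathProduct := (A → C) ⋊[shiftAut A C] Multiplicative A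

notation:70 C " ≀ " A => WreathProduct A C

end Wreath

lemma Pi.commutatorElement_mulSingle {ι : Type*} [DecidableEq ι] {G : Type*} [Group G]
    (f : ι → G) (i : ι) (g : G) :
    ⁅f, Pi.mulSingle i g⁆ = Pi.mulSingle (M := fun _ => G) i ⁅f i, g⁆ := by
  funext j
  rcases eq_or_ne j i with rfl | h
  · simp [commutatorElement_def]
  · simp [commutatorElement_def, h]

namespace WreathProduct

open SemidirectProduct Multiplicative

variable {A : Type} [AddCommGroup A] {C : Type u} [Group C]

lemma inr_mul_inl_mul_inr_inv (a : A) (f : A → C) :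
    (inr (ofAdd a) * inl f * (inr (ofAdd a))⁻¹ : C ≀ A) = inl fun x => f (x - a) := by
  rw [← map_inv]
  exact (inl_aut _ _).symm

lemma inr_mul_inl_mulSingle_mul_inr_inv [DecidableEq A] (a x : A) (c : C) :
    (inr (ofAdd a) * inl (Pi.mulSingle x c) * (inr (ofAdd a))⁻¹ : C ≀ A) =
      inl (Pi.mulSingle (x + a) c) := by
  rw [inr_mul_inl_mul_inr_inv]
  congr 1
  funext y
  simp only [Pi.mulSingle_apply, sub_eq_iff_eq_add]

lemma inr_ofAdd_zpow (a : A) (k : ℤ) : (inr (ofAdd a) : C ≀ A) ^ k = inr (ofAdd (k • a)) := by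
  rw [← map_zpow, ← ofAdd_zsmul]

lemma commutatorElement_inl_inr (f : A → C) (a : A) :
    ⁅(inl f : C ≀ A), (inr (ofAdd a) : C ≀ A)⁆ = inl fun x => f x * (f (x - a))⁻¹ := by
  calc ⁅(inl f : C ≀ A), (inr (ofAdd a) : C ≀ A)⁆
      = inl f * (inr (ofAdd a) * inl f⁻¹ * (inr (ofAdd a))⁻¹) := by
        simp only [commutatorElement_def, map_inv, mul_assoc]
    _ = inl fun x => f x * (f (x - a))⁻¹ := by
        rw [inr_mul_inl_mul_inr_inv, ← map_mul]
        rfl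

variable [DecidableEq A]

def single : C →* C ≀ A := inl.comp (MonoidHom.mulSingle (fun _ : A => C) 0)

lemma single_injective : Function.Injective (single : C →* C ≀ A) :=
  inl_injective.comp (Pi.mulSingle_injective (M := fun _ : A => C) 0)

lemma commutatorElement_inl_single (f : A → C) (c : C) :
    ⁅(inl f : C ≀ A), single c⁆ = (single ⁅f 0, c⁆ : C ≀ A) := by
  rw [single, MonoidHom.comp_apply, MonoidHom.comp_apply, ← map_commutatorElement,
    MonoidHom.mulSingle_apply, Pi.commutatorElement_mulSingle]
  rfl

end WreathProduct

namespace SemidirectProduct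

variable {N G : Type*} [Group N] [Group G] {φ : G →* MulAut N} {T : Subgroup N}
  {hT : ∀ g, ∀ n ∈ T, φ g n ∈ T}

lemma inl_mem_leftIn {n : N} : inl n ∈ leftIn T hT ↔ n ∈ T := Iff.rfl

lemma inr_mem_leftIn (g : G) : inr g ∈ leftIn T hT := one_mem T

end SemidirectProduct

def curryMonoidHom (α β M : Type*) [Monoid M] : (α × β → M) →* (α → β → M) where
  toFun := Function.curry
  map_one' := rfl
  map_mul' _ _ := rfl

@[simp]
lemma curryMonoidHom_apply {α β M : Type*} [Monoid M] (F : α × β → M) (a : α) (b : β) :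
    curryMonoidHom α β M F a b = F (a, b) :=
  rfl

section Embedding

open SemidirectProduct WreathProduct Multiplicative

variable {H : Type u} [Group H]

variable (H) in
def tameConfigs : Subgroup (ℤ × ℤ → H) :=
  (piEventually cofinite (trivialAtBotConstAtTop H) ⊥).comap (curryMonoidHom ℤ ℤ H)

lemma shiftAut_mem_tameConfigs (g : Multiplicative (ℤ × ℤ)) {F : ℤ × ℤ → H}
    (hF : F ∈ tameConfigs H) : shiftAut (ℤ × ℤ) H g F ∈ tameConfigs H :=
  map_comp_mem_piEventually (shiftAut ℤ H (ofAdd g.toAdd.2)).toMonoidHom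
    (fun _ hf => Subgroup.mem_comap.mpr (comp_sub_mem_trivialAtBotConstAtTop hf _)) bot_le
    (sub_left_injective.tendsto_cofinite) hF

variable (H) in
def tameLamplighter : Subgroup (H ≀ (ℤ × ℤ)) :=
  leftIn (tameConfigs H) shiftAut_mem_tameConfigs

lemma IsElementaryAmenable.tameLamplighter (hH : IsElementaryAmenable H) :
    IsElementaryAmenable (tameLamplighter H) :=
  .leftIn _ (hH.trivialAtBotConstAtTop.piEventually_cofinite_bot.comap _
    Function.curry_injective)

def rowRay (m : ℤ) (h : H) : ℤ × ℤ → H := fun x => if x.1 = m ∧ 0 ≤ x.2 then h else 1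

lemma rowRay_mem_tameConfigs (m : ℤ) (h : H) : rowRay m h ∈ tameConfigs H := by
  have hrow : ∀ j ≠ m, curryMonoidHom ℤ ℤ H (rowRay m h) j = 1 := fun j hj => by
    funext i
    simp [rowRay, hj]
  refine ⟨fun j => ?_, (eventually_cofinite_ne m).mono fun j hj => hrow j hj ▸ one_mem _⟩
  rcases eq_or_ne j m with rfl | hj
  · refine ⟨(eventually_lt_atBot 0).mono fun i hi => ?_, h, (eventually_ge_atTop 0).mono
      fun i hi => ?_⟩ <;> simp [rowRay, hi, not_le.mpr]
  · exact hrow j hj ▸ one_mem _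

lemma commute_rowRay (e : ℤ → H) (p q : ℤ) : Commute (rowRay p (e p)) (rowRay q (e q)) := by
  rcases eq_or_ne p q with rfl | hpq
  · exact .refl _
  refine Pi.commute_iff.mpr fun x => ?_
  by_cases hp : x.1 = p
  · rw [show rowRay q (e q) x = 1 from if_neg fun h => hpq (hp.symm.trans h.1)]
    exact .one_right _
  · rw [show rowRay p (e p) x = 1 from if_neg fun h => hp h.1]
    exact .one_left _

def horizontalShift : H ≀ (ℤ × ℤ) := inr (ofAdd (0, 1))

def verticalShift : H ≀ (ℤ × ℤ) := inr (ofAdd (1, 0))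

def outerShift : (H ≀ (ℤ × ℤ)) ≀ ℤ := inr (ofAdd 1)

def rays (e : ℤ → H) : (H ≀ (ℤ × ℤ)) ≀ ℤ := inl fun p => inl (rowRay p (e p))

def embeddingGroup (e : ℤ → H) : Subgroup ((H ≀ (ℤ × ℤ)) ≀ ℤ) :=
  Subgroup.closure {outerShift, rays e, single horizontalShift, single verticalShift}

lemma commutatorElement_rowRay_horizontalShift (m : ℤ) (h : H) :
    ⁅(inl (rowRay m h) : H ≀ (ℤ × ℤ)), horizontalShift⁆ =
      (inl (Pi.mulSingle (m, 0) h) : H ≀ (ℤ × ℤ)) := by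
  rw [horizontalShift, commutatorElement_inl_inr]
  congr 1
  funext ⟨i, j⟩
  simp only [rowRay, Pi.mulSingle_apply, Prod.mk_sub_mk, sub_zero, Prod.mk.injEq]
  split_ifs <;> first | (exfalso; omega) | simp

lemma single_single_mem_embeddingGroup (e : ℤ → H) (m : ℤ) :
    single (single (e m)) ∈ embeddingGroup e := by
  have hshifted : outerShift ^ (-m) * rays e * (outerShift ^ (-m))⁻¹ =
      inl fun p => inl (rowRay (p + m) (e (p + m))) := by
    rw [outerShift, rays, inr_ofAdd_zpow, smul_eq_mul, mul_one, inr_mul_inl_mul_inr_inv]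
    simp only [sub_neg_eq_add]
  have hword : (single (single (e m)) : (H ≀ (ℤ × ℤ)) ≀ ℤ) = single verticalShift ^ (-m) *
      ⁅outerShift ^ (-m) * rays e * (outerShift ^ (-m))⁻¹, single horizontalShift⁆ *
      (single verticalShift ^ (-m))⁻¹ := by
    rw [hshifted, commutatorElement_inl_single, zero_add, commutatorElement_rowRay_horizontalShift,
      ← map_zpow, ← map_inv, ← map_mul, ← map_mul, verticalShift, inr_ofAdd_zpow,
      inr_mul_inl_mulSingle_mul_inr_inv]
    simp [single, Prod.mk_zero_zero]
  have hgen : ∀ x ∈ ({outerShift, rays e, single horizontalShift, single verticalShift} :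
      Set ((H ≀ (ℤ × ℤ)) ≀ ℤ)), x ∈ embeddingGroup e := fun _ hx => Subgroup.subset_closure hx
  have hshifted_mem := mul_mem (mul_mem (zpow_mem (hgen outerShift (by simp)) (-m))
    (hgen (rays e) (by simp))) (inv_mem (zpow_mem (hgen outerShift (by simp)) (-m)))
  have hhor := hgen (single horizontalShift) (by simp)
  have hvert := zpow_mem (hgen (single verticalShift) (by simp)) (-m)
  rw [hword, commutatorElement_def]
  exact mul_mem (mul_mem hvert (mul_mem (mul_mem (mul_mem hshifted_mem hhor) (inv_mem hshifted_mem))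
    (inv_mem hhor))) (inv_mem hvert)

def rayCoordinates (e : ℤ → H) : Subgroup (H ≀ (ℤ × ℤ)) :=
  Subgroup.closure (Set.range fun p => inl (rowRay p (e p)))

instance (e : ℤ → H) : IsMulCommutative (rayCoordinates e) :=
  Subgroup.isMulCommutative_closure <| by
    rintro _ ⟨p, rfl⟩ _ ⟨q, rfl⟩
    rw [← map_mul, ← map_mul, (commute_rowRay e p q).eq]

def embeddingEnvelope (e : ℤ → H) : Subgroup ((H ≀ (ℤ × ℤ)) ≀ ℤ) :=
  leftIn (piEventually cofinite (tameLamplighter H) (rayCoordinates e)) fun _ _ hf =>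
    map_comp_mem_piEventually (MonoidHom.id _) le_rfl le_rfl
      sub_left_injective.tendsto_cofinite hf

lemma embeddingGroup_le_embeddingEnvelope (e : ℤ → H) :
    embeddingGroup e ≤ embeddingEnvelope e := by
  refine (Subgroup.closure_le _).mpr ?_
  rintro _ (rfl | rfl | rfl | rfl)
  · exact inr_mem_leftIn _
  · exact inl_mem_leftIn.mpr ⟨fun p => inl_mem_leftIn.mpr (rowRay_mem_tameConfigs _ _),
      .of_forall fun p => Subgroup.subset_closure ⟨p, rfl⟩⟩
  all_goals exact inl_mem_leftIn.mpr (mulSingle_mem_piEventually_cofinite 0 (inr_mem_leftIn _))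

lemma IsElementaryAmenable.embeddingGroup (hH : IsElementaryAmenable H) (e : ℤ → H) :
    IsElementaryAmenable (embeddingGroup e) :=
  .of_le (embeddingGroup_le_embeddingEnvelope e)
    (.leftIn _ hH.tameLamplighter.piEventually_cofinite)

end Embedding

/-- Every countable elementary amenable group embeds into a finitely generated elementary
amenable group. -/
theorem countable_elementary_amenable_embeds_in_fg (H : Type u) [Group H]
    (hc : Countable H) (hea : IsElementaryAmenable H) :
    ∃ (G : Type u) (instG : Group G), Group.FG G ∧ IsElementaryAmenable G ∧
      ∃ φ : H →* G, Function.Injective φ := by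
  obtain ⟨e, he⟩ : ∃ e : ℤ → H, Function.Surjective e := by
    obtain ⟨e, he⟩ := exists_surjective_nat H
    exact ⟨fun n => e n.toNat, fun h => let ⟨n, hn⟩ := he h; ⟨n, by simpa using hn⟩⟩
  have hmem : ∀ h, WreathProduct.single (WreathProduct.single h) ∈ embeddingGroup e := fun h => by
    obtain ⟨m, rfl⟩ := he h
    exact single_single_mem_embeddingGroup e m
  exact ⟨embeddingGroup e, inferInstance, Group.closure_finite_fg _, hea.embeddingGroup e,
    (WreathProduct.single.comp WreathProduct.single).codRestrict _ hmem,
    (MonoidHom.injective_codRestrict _ _ _).mpr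
      (WreathProduct.single_injective.comp WreathProduct.single_injective)⟩
end

section
/- Let H be a group with a length function ℓ and a generating family (h_i)_{i∈I}, F the free group with basis (x_i)_{i∈I}, A the free abelian group with basis (a_i)_{i∈I}, and V = A ≀ H the restricted wreath product with base subgroup W. Set l_i = max(ℓ(h_i), 1) and let μ : F → V be the generalized Magnus homomorphism determined by μ(x_i) = a_i^{l_i} h_i. If f ∈ F and μ(f) = w·g with w ∈ W and g ∈ H, then ℓ(g) ≤ ‖w‖. -/
/-- `ℓ` is a length function on the group `H`. -/
def IsLengthFunction {H : Type*} [Group H] (ℓ : H → ℕ) : Prop :=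
  (∀ h : H, ℓ h = 0 ↔ h = 1) ∧ (∀ h : H, ℓ h⁻¹ = ℓ h) ∧ ∀ g h : H, ℓ (g * h) ≤ ℓ g + ℓ h

/-- The additive automorphism of the base `H →₀ A` of a wreath product given by right
translation of the domain: `(b ∘ f)(x) = f (x * b)`. -/
noncomputable def wreathShift {H : Type*} [Group H] {A : Type*} [AddCommGroup A] (b : H) :
    (H →₀ A) ≃+ (H →₀ A) := Finsupp.domCongr (Equiv.mulRight b).symm

@[simp] theorem wreathShift_apply {H : Type*} [Group H] {A : Type*} [AddCommGroup A]
    (b : H) (f : H →₀ A) (x : H) : wreathShift b f x = f (x * b) := by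
  simp [wreathShift, Finsupp.domCongr_apply]

/-- The action of `H` on the (multiplicative) base of the wreath product `A ≀ H`. -/
noncomputable def wreathAction (H : Type*) [Group H] (A : Type*) [AddCommGroup A] :
    H →* MulAut (Multiplicative (H →₀ A)) where
  toFun b := AddEquiv.toMultiplicative (wreathShift b)
  map_one' := by
    refine MulEquiv.ext fun f => ?_
    refine Finsupp.ext fun x => ?_
    show Finsupp.equivMapDomain (Equiv.mulRight (1 : H)).symm (Multiplicative.toAdd f) x
        = (Multiplicative.toAdd f) x
    simp [Finsupp.equivMapDomain_apply]
  map_mul' := by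
    intro a b
    refine MulEquiv.ext fun f => ?_
    refine Finsupp.ext fun x => ?_
    show Finsupp.equivMapDomain (Equiv.mulRight (a * b)).symm (Multiplicative.toAdd f) x
        = Finsupp.equivMapDomain (Equiv.mulRight a).symm
            (Finsupp.equivMapDomain (Equiv.mulRight b).symm (Multiplicative.toAdd f)) x
    simp [Finsupp.equivMapDomain_apply, mul_assoc]

/-- The wreath product `A ≀ H` of an additive abelian group `A` (the lamp group, written
multiplicatively) by a group `H`, realized as a semidirect product of the base
`H →₀ A` by `H`. -/
noncomputable def WreathProd (A : Type*) [AddCommGroup A] (H : Type*) [Group H] :=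
  (Multiplicative (H →₀ A)) ⋊[wreathAction H A] H

noncomputable instance (A : Type*) [AddCommGroup A] (H : Type*) [Group H] :
    Group (WreathProd A H) :=
  inferInstanceAs (Group ((Multiplicative (H →₀ A)) ⋊[wreathAction H A] H))

/-- The embedding of the base into the wreath product. -/
noncomputable def wreathBase {A : Type*} [AddCommGroup A] {H : Type*} [Group H]
    (w : H →₀ A) : WreathProd A H :=
  SemidirectProduct.inl (Multiplicative.ofAdd w)

/-- The embedding of `H` into the wreath product. -/
noncomputable def wreathRight {A : Type*} [AddCommGroup A] {H : Type*} [Group H]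
    (h : H) : WreathProd A H :=
  SemidirectProduct.inr h

/-- The norm `‖w‖` of an element of the base of `A ≀ H`, where `A` is free abelian with basis
indexed by `I`: the sum of the absolute values of all the integer coefficients. -/
noncomputable def baseNorm {H I : Type*} (w : H →₀ (I →₀ ℤ)) : ℕ :=
  w.sum fun _ t => t.sum fun _ k => k.natAbs


/-!
For every `c ∈ H` pair the base with the coefficients
`φ_c(u, i) = (ℓ(h_i⁻¹ u c) - ℓ(u c)) / l_i`, which lie in `[-1, 1]` because `ℓ(h_i) ≤ l_i`.
The elements `w·g` of the wreath product whose base satisfies `φ_c(w) = ℓ(g⁻¹ c) - ℓ(c)` for all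
`c` form a subgroup containing every `a_i^{l_i} h_i`, hence the image of `μ`. Taking `c = 1`
gives `ℓ(g) = φ_1(w) ≤ ‖w‖`.
-/

namespace WreathProd

variable {A : Type*} [AddCommGroup A] {H : Type*} [Group H]

noncomputable def base (p : WreathProd A H) : H →₀ A :=
  Multiplicative.toAdd (show Multiplicative (H →₀ A) ⋊[wreathAction H A] H from p).left

def right (p : WreathProd A H) : H :=
  (show Multiplicative (H →₀ A) ⋊[wreathAction H A] H from p).right

@[simp] theorem base_one : (1 : WreathProd A H).base = 0 := rfl

@[simp] theorem right_one : (1 : WreathProd A H).right = 1 := rfl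

theorem base_mul (p q : WreathProd A H) : (p * q).base = p.base + wreathShift p.right q.base :=
  rfl

@[simp] theorem right_mul (p q : WreathProd A H) : (p * q).right = p.right * q.right := rfl

theorem base_inv (p : WreathProd A H) : p⁻¹.base = wreathShift p.right⁻¹ (-p.base) := rfl

@[simp] theorem right_inv (p : WreathProd A H) : p⁻¹.right = p.right⁻¹ := rfl

@[simp] theorem base_wreathBase_mul_wreathRight (w : H →₀ A) (g : H) :
    (wreathBase w * wreathRight g).base = w := by
  rw [base_mul]
  exact add_eq_left.mpr (map_zero (wreathShift _))

@[simp] theorem right_wreathBase_mul_wreathRight (w : H →₀ A) (g : H) :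
    (wreathBase w * wreathRight g).right = g :=
  one_mul g

end WreathProd

theorem IsLengthFunction.abs_length_mul_sub_le {H : Type*} [Group H] {ℓ : H → ℕ}
    (hℓ : IsLengthFunction ℓ) (g x : H) : |(ℓ (g * x) : ℚ) - ℓ x| ≤ ℓ g := by
  obtain ⟨-, hinv, hmul⟩ := hℓ
  have hle : (ℓ (g * x) : ℚ) ≤ ℓ g + ℓ x := by exact_mod_cast hmul g x
  have hge : (ℓ x : ℚ) ≤ ℓ g + ℓ (g * x) := by
    have := hmul g⁻¹ (g * x)
    rw [hinv, inv_mul_cancel_left] at this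
    exact_mod_cast this
  rw [abs_sub_le_iff]
  constructor <;> linarith

section BaseFunctional

variable {H I : Type*}

noncomputable def baseFunctional (coef : H → I → ℚ) : (H →₀ (I →₀ ℤ)) →+ ℚ :=
  Finsupp.liftAddHom fun u => Finsupp.liftAddHom fun i => zmultiplesHom ℚ (coef u i)

theorem baseFunctional_single (coef : H → I → ℚ) (u : H) (i : I) (k : ℤ) :
    baseFunctional coef (Finsupp.single u (Finsupp.single i k)) = k * coef u i := by
  simp only [baseFunctional, Finsupp.liftAddHom_apply_single, zmultiplesHom_apply, zsmul_eq_mul]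

theorem baseFunctional_wreathShift [Group H] (coef : H → I → ℚ) (b : H) (w : H →₀ (I →₀ ℤ)) :
    baseFunctional coef (wreathShift b w) = baseFunctional (fun u => coef (u * b⁻¹)) w := by
  induction w using Finsupp.induction with
  | zero => simp
  | single_add u t w _ _ ih =>
    rw [map_add, map_add, ih, map_add]
    congr 1
    simp only [wreathShift, Finsupp.domCongr_apply, Finsupp.equivMapDomain_single, baseFunctional,
      Finsupp.liftAddHom_apply_single, Equiv.mulRight_symm, Equiv.coe_mulRight]

theorem abs_baseFunctional_le (coef : H → I → ℚ) (hcoef : ∀ u i, |coef u i| ≤ 1)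
    (w : H →₀ (I →₀ ℤ)) : |baseFunctional coef w| ≤ baseNorm w := by
  have habs (t : I →₀ ℤ) (u : H) :
      |t.sum fun i k => k • coef u i| ≤ ((t.sum fun _ k => k.natAbs : ℕ) : ℚ) := by
    rw [Finsupp.sum, Finsupp.sum, Nat.cast_sum]
    refine (Finset.abs_sum_le_sum_abs _ _).trans (Finset.sum_le_sum fun i _ => ?_)
    rw [zsmul_eq_mul, abs_mul, Nat.cast_natAbs, Int.cast_abs]
    exact mul_le_of_le_one_right (abs_nonneg _) (hcoef u i)
  simp only [baseFunctional, Finsupp.liftAddHom_apply]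
  rw [baseNorm, Finsupp.sum, Finsupp.sum, Nat.cast_sum]
  exact (Finset.abs_sum_le_sum_abs _ _).trans (Finset.sum_le_sum fun u _ => habs (w u) u)

end BaseFunctional

section Magnus

variable {H I : Type*} [Group H]

noncomputable def magnusHom (h : I → H) (l : I → ℤ) : FreeGroup I →* WreathProd (I →₀ ℤ) H :=
  FreeGroup.lift fun i => wreathBase (Finsupp.single 1 (Finsupp.single i (l i))) * wreathRight (h i)

variable (ℓ : H → ℕ) (h : I → H) (l : I → ℤ)

noncomputable def magnusCoef (c : H) (u : H) (i : I) : ℚ :=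
  ((ℓ ((h i)⁻¹ * (u * c)) : ℚ) - ℓ (u * c)) / l i

theorem magnusCoef_mul_right (c b : H) :
    (fun u => magnusCoef ℓ h l c (u * b)) = magnusCoef ℓ h l (b * c) := by
  funext u i
  simp only [magnusCoef, mul_assoc]

theorem abs_magnusCoef_le {ℓ} (hℓ : IsLengthFunction ℓ) (hl : ∀ i, (ℓ (h i) : ℤ) ≤ l i)
    (c u : H) (i : I) : |magnusCoef ℓ h l c u i| ≤ 1 := by
  have hli : (ℓ (h i) : ℚ) ≤ l i := by exact_mod_cast hl i
  have hdiff := hℓ.abs_length_mul_sub_le (h i)⁻¹ (u * c)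
  rw [hℓ.2.1] at hdiff
  rw [magnusCoef, abs_div]
  exact div_le_one_of_le₀ (hdiff.trans (hli.trans (le_abs_self _))) (abs_nonneg _)

noncomputable def magnusSubgroup : Subgroup (WreathProd (I →₀ ℤ) H) where
  carrier := {p | ∀ c, baseFunctional (magnusCoef ℓ h l c) p.base = ℓ (p.right⁻¹ * c) - ℓ c}
  one_mem' c := by simp
  mul_mem' {p q} hp hq c := by
    rw [WreathProd.base_mul, map_add, baseFunctional_wreathShift, magnusCoef_mul_right, hp c,
      hq (p.right⁻¹ * c), WreathProd.right_mul, mul_inv_rev, mul_assoc]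
    ring
  inv_mem' {p} hp c := by
    rw [WreathProd.base_inv, baseFunctional_wreathShift, inv_inv, magnusCoef_mul_right, map_neg,
      hp (p.right * c), WreathProd.right_inv, inv_inv, inv_mul_cancel_left]
    ring

theorem magnusHom_mem_magnusSubgroup (hl : ∀ i, l i ≠ 0) (f : FreeGroup I) :
    magnusHom h l f ∈ magnusSubgroup ℓ h l := by
  refine FreeGroup.range_lift_le ?_ ⟨f, rfl⟩
  rintro _ ⟨i, rfl⟩ c
  have hli : (l i : ℚ) ≠ 0 := by exact_mod_cast hl i
  rw [WreathProd.base_wreathBase_mul_wreathRight, WreathProd.right_wreathBase_mul_wreathRight,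
    baseFunctional_single, magnusCoef, one_mul, mul_div_cancel₀ _ hli]

end Magnus

theorem generalized_magnus_length_bound_general {H : Type} [Group H] {I : Type}
    (ℓ : H → ℕ) (hℓ : IsLengthFunction ℓ) (h : I → H)
    (f : FreeGroup I) (w : H →₀ (I →₀ ℤ)) (g : H)
    (hf : FreeGroup.lift (fun i => wreathBase (Finsupp.single (1 : H)
            (Finsupp.single i (max (ℓ (h i)) 1 : ℤ))) * wreathRight (h i)) f
          = wreathBase w * wreathRight g) :
    ℓ g ≤ baseNorm w := by
  set l : I → ℤ := fun i => max (ℓ (h i)) 1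
  have hmem : wreathBase w * wreathRight g ∈ magnusSubgroup ℓ h l :=
    hf ▸ magnusHom_mem_magnusSubgroup ℓ h l (fun i => by positivity) f
  have hφ : baseFunctional (magnusCoef ℓ h l 1) w = ℓ g := by
    simpa only [WreathProd.base_wreathBase_mul_wreathRight,
      WreathProd.right_wreathBase_mul_wreathRight, mul_one, hℓ.2.1, (hℓ.1 1).2 rfl, Nat.cast_zero,
      sub_zero] using hmem 1
  have hcoef := abs_magnusCoef_le h l hℓ (fun i => le_max_left _ _) 1
  suffices (ℓ g : ℚ) ≤ baseNorm w by exact_mod_cast this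
  calc (ℓ g : ℚ) = baseFunctional (magnusCoef ℓ h l 1) w := hφ.symm
    _ ≤ |baseFunctional (magnusCoef ℓ h l 1) w| := le_abs_self _
    _ ≤ baseNorm w := abs_baseFunctional_le _ hcoef w

/-- **Metric Magnus lemma.** Let `μ : F → A ≀ H` be the generalized Magnus homomorphism
`μ(x_i) = a_i^{l_i} h_i`, where `l_i = max(ℓ(h_i), 1)`. If `μ(f) = w·g` with `w` in the base
and `g ∈ H`, then `ℓ(g) ≤ ‖w‖`. -/
theorem generalized_magnus_length_bound {H : Type} [Group H] {I : Type}
    (ℓ : H → ℕ) (hℓ : IsLengthFunction ℓ) (h : I → H)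
    (hgen : Subgroup.closure (Set.range h) = ⊤)
    (f : FreeGroup I) (w : H →₀ (I →₀ ℤ)) (g : H)
    (hf : FreeGroup.lift (fun i => wreathBase (Finsupp.single (1 : H)
            (Finsupp.single i (max (ℓ (h i)) 1 : ℤ))) * wreathRight (h i)) f
          = wreathBase w * wreathRight g) :
    ℓ g ≤ baseNorm w :=
  generalized_magnus_length_bound_general ℓ hℓ h f w g hf
end

section
/- Let H be a group generated by a family X = (h_i)_{i∈I}, F the free group with basis (x_i)_{i∈I}, ε : F → H the surjection x_i ↦ h_i with kernel N, A the free abelian group with basis (a_i)_{i∈I}, and μ : F → V = A ≀ H the Magnus homomorphism determined by μ(x_i) = a_i h_i. Suppose f ∈ F and μ(f) = w·g with g ∈ H and w in the base subgroup W of V. Then |g|_X = ‖w‖ if and only if the word length of the image of f in H ≅ F/N with respect to the images of (x_i) equals the word length of the image of f in F/[N,N] with respect to the images of (x_i). -/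
/-- The word length of `g` with respect to a generating set `X`: the least length of a word in
`X ∪ X⁻¹` representing `g`. -/
noncomputable def wordLength {G : Type*} [Group G] (X : Set G) (g : G) : ℕ :=
  sInf {n | ∃ l : List G, l.length = n ∧ (∀ x ∈ l, x ∈ X ∨ x⁻¹ ∈ X) ∧ l.prod = g}

/-!
Write `μ(f) = w·g`. Read `w` as a 1-chain on the Cayley graph of `H`, the atom at `(s, i)` being
the edge from `s` to `h_i⁻¹ s`; its boundary is then `δ_1 - δ_{g⁻¹}`. Repeatedly removing a unit
edge that leaves the current source of this flow writes `w` as the Magnus base component of a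
word `L` representing `g` plus a remainder `r`, with `‖w‖ = |L| + ‖r‖`. Hence `|g| ≤ ‖w‖`, and
if `|g| = ‖w‖` the remainder vanishes, so `L` has length `‖w‖` and the same Magnus image as `f`.

By Magnus' theorem `ker μ = [N, N]`. As the base norm of the Magnus image of a word is at most
its length, `‖w‖ ≤ |f|_{F/[N,N]}`; and when `|g| = ‖w‖` the word `L` above represents `f` in
`F/[N,N]`, so `|f|_{F/[N,N]} ≤ ‖w‖`. Both directions follow from `|g| ≤ ‖w‖ ≤ |f|_{F/[N,N]}`.

For `ker μ ≤ [N, N]`, fix a set-theoretic section `σ` of `ε`. The class of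
`σ(p) u σ(p ε(u))⁻¹` in `N^{ab}` is a cocycle in `u`, and so is the image of the translated base
component of `μ(u)` under the additive map sending the atom `(s, i)` to the class of
`σ(s⁻¹) x_i σ(s⁻¹ h_i)⁻¹`. They agree on generators, hence everywhere; for `p = 1` and
`μ(u) = 1` this gives `σ(1) u σ(1)⁻¹ ∈ [N, N]`.
-/

open Finsupp

section WordLength

variable {G : Type*} [Group G] {I : Type*} (h : I → G)

theorem wordLength_range_eq_sInf (g : G) :
    wordLength (Set.range h) g =
      sInf {n | ∃ L : List (I × Bool), L.length = n ∧ FreeGroup.lift h (FreeGroup.mk L) = g} := by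
  let letter : I × Bool → G := fun x => cond x.2 (h x.1) (h x.1)⁻¹
  have hletter : Set.range letter = {y | y ∈ Set.range h ∨ y⁻¹ ∈ Set.range h} := by
    ext y
    constructor
    · rintro ⟨⟨i, _ | _⟩, rfl⟩ <;> simp [letter]
    · rintro (⟨i, rfl⟩ | ⟨i, hi⟩)
      exacts [⟨(i, true), rfl⟩, ⟨(i, false), by simp [letter, hi]⟩]
  unfold wordLength
  congr 1
  ext n
  constructor
  · rintro ⟨l, rfl, hl, rfl⟩
    obtain ⟨L, rfl⟩ : l ∈ Set.range (List.map letter) := by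
      rw [Set.range_list_map, hletter]; exact hl
    exact ⟨L, (List.length_map _).symm, FreeGroup.lift_mk⟩
  · rintro ⟨L, rfl, rfl⟩
    refine ⟨L.map letter, List.length_map _, fun y hy => ?_, FreeGroup.lift_mk.symm⟩
    have : L.map letter ∈ Set.range (List.map letter) := ⟨L, rfl⟩
    rw [Set.range_list_map, hletter] at this
    exact this y hy

theorem wordLength_lift_mk_le (L : List (I × Bool)) :
    wordLength (Set.range h) (FreeGroup.lift h (FreeGroup.mk L)) ≤ L.length := by
  rw [wordLength_range_eq_sInf]
  exact Nat.sInf_le ⟨L, rfl, rfl⟩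

theorem exists_length_eq_wordLength (hgen : Subgroup.closure (Set.range h) = ⊤) (g : G) :
    ∃ L : List (I × Bool), L.length = wordLength (Set.range h) g ∧
      FreeGroup.lift h (FreeGroup.mk L) = g := by
  rw [wordLength_range_eq_sInf]
  refine Nat.sInf_mem (s := {n | ∃ L : List (I × Bool), L.length = n ∧
    FreeGroup.lift h (FreeGroup.mk L) = g}) ?_
  obtain ⟨u, rfl⟩ := (FreeGroup.lift_surjective_iff_closure_range_eq_top.2 hgen) g
  classical
  exact ⟨_, u.toWord, rfl, by rw [FreeGroup.mk_toWord]⟩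

end WordLength

def IsCocycle {G H A : Type*} [Group G] [Group H] [Add A] (ε : G →* H) (c : H → G → A) :
    Prop :=
  ∀ p u v, c p (u * v) = c p u + c (p * ε u) v

namespace IsCocycle

variable {G H A : Type*} [Group G] [Group H] [AddGroup A] {ε : G →* H} {c : H → G → A}

theorem apply_one (hc : IsCocycle ε c) (p : H) : c p 1 = 0 := by
  have h11 := hc p 1 1
  rw [mul_one, map_one, mul_one] at h11
  exact left_eq_add.mp h11

theorem apply_inv (hc : IsCocycle ε c) (p : H) (u : G) : c p u⁻¹ = -c (p * ε u⁻¹) u := by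
  have h := hc p u⁻¹ u
  rw [inv_mul_cancel, hc.apply_one] at h
  exact eq_neg_of_add_eq_zero_left h.symm

theorem ext_of_freeGroup {I : Type*} {ε : FreeGroup I →* H} {c d : H → FreeGroup I → A}
    (hc : IsCocycle ε c) (hd : IsCocycle ε d) (hof : ∀ p i, c p (.of i) = d p (.of i)) :
    c = d := by
  funext p u
  induction u using FreeGroup.induction_on generalizing p with
  | C1 => rw [hc.apply_one, hd.apply_one]
  | of i => exact hof p i
  | inv_of i _ => rw [hc.apply_inv, hd.apply_inv, hof]
  | mul u v hu hv => rw [hc, hd, hu, hv]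

end IsCocycle

section BaseNorm

theorem Finsupp.sum_add_single_add {α M N : Type*} [AddMonoid M] [AddCommMonoid N]
    (f : α →₀ M) (i : α) (a : M) {g : α → M → N} (hg : ∀ j, g j 0 = 0) :
    (f + single i a).sum g + g i (f i) = f.sum g + g i (f i + a) := by
  classical
  have hupd : f + single i a = f.update i (f i + a) := by
    ext j
    rcases eq_or_ne j i with rfl | hj <;> simp [*]
  rw [hupd, ← add_sum_erase' _ i g hg, ← add_sum_erase' f i g hg, erase_update_eq_erase,
    update_apply, if_pos rfl]
  abel

theorem Finsupp.sum_nat_eq_zero_iff {α M : Type*} [Zero M] (f : α →₀ M)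
    {g : α → M → ℕ} (hg : ∀ a b, g a b = 0 ↔ b = 0) : f.sum g = 0 ↔ f = 0 := by
  simp [Finsupp.sum, Finset.sum_eq_zero_iff, hg, Finsupp.ext_iff]

variable {H I : Type*}

theorem baseNorm_eq_zero_iff {w : H →₀ (I →₀ ℤ)} : baseNorm w = 0 ↔ w = 0 :=
  Finsupp.sum_nat_eq_zero_iff w fun _ t =>
    Finsupp.sum_nat_eq_zero_iff t fun _ _ => Int.natAbs_eq_zero

theorem baseNorm_add_single_single (w : H →₀ (I →₀ ℤ)) (s : H) (i : I) (c : ℤ) :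
    baseNorm (w + single s (single i c)) + (w s i).natAbs = baseNorm w + (w s i + c).natAbs := by
  have outer := Finsupp.sum_add_single_add w s (single i c)
    (g := fun _ t => t.sum fun _ k => k.natAbs) fun _ => sum_zero_index
  have inner := Finsupp.sum_add_single_add (w s) i c (g := fun _ k => k.natAbs) fun _ => rfl
  unfold baseNorm
  omega

theorem baseNorm_add_single_single_le (w : H →₀ (I →₀ ℤ)) (s : H) (i : I) (c : ℤ) :
    baseNorm (w + single s (single i c)) ≤ baseNorm w + c.natAbs := by
  have := baseNorm_add_single_single w s i c
  have := Int.natAbs_add_le (w s i) c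
  omega

end BaseNorm

section Wreath

variable {H : Type*} [Group H] {A : Type*} [AddCommGroup A]

@[simp] theorem wreathShift_single (p s : H) (a : A) :
    wreathShift p (single s a) = single (s * p⁻¹) a := by
  rw [wreathShift, domCongr_apply, equivMapDomain_single]
  simp

@[simp] theorem wreathShift_one (w : H →₀ A) : wreathShift 1 w = w := by
  ext x
  simp

theorem wreathShift_wreathShift (p q : H) (w : H →₀ A) :
    wreathShift p (wreathShift q w) = wreathShift (p * q) w := by
  ext x
  simp [mul_assoc]

@[simp] theorem baseNorm_wreathShift {I : Type*} (p : H) (w : H →₀ (I →₀ ℤ)) :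
    baseNorm (wreathShift p w) = baseNorm w :=
  sum_equivMapDomain _ _ _

noncomputable def wreathRightHom : WreathProd A H →* H := SemidirectProduct.rightHom

def wreathLeft (x : WreathProd A H) : H →₀ A := Multiplicative.toAdd (SemidirectProduct.left x)

theorem wreathBase_mul_wreathRight_eq_mk (w : H →₀ A) (g : H) :
    (wreathBase w * wreathRight g : WreathProd A H) =
      (⟨Multiplicative.ofAdd w, g⟩ : Multiplicative (H →₀ A) ⋊[wreathAction H A] H) :=
  (SemidirectProduct.mk_eq_inl_mul_inr _ _).symm

theorem eq_wreathBase_mul_wreathRight (x : WreathProd A H) :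
    x = wreathBase (wreathLeft x) * wreathRight (wreathRightHom x) := by
  rw [wreathBase_mul_wreathRight_eq_mk]
  rfl

theorem wreathRightHom_wreathBase_mul_wreathRight (w : H →₀ A) (g : H) :
    wreathRightHom (wreathBase w * wreathRight g : WreathProd A H) = g := by
  rw [wreathBase_mul_wreathRight_eq_mk]
  rfl

theorem wreathBase_mul_wreathRight_inj {w w' : H →₀ A} {g g' : H} :
    (wreathBase w * wreathRight g : WreathProd A H) = wreathBase w' * wreathRight g' ↔
      w = w' ∧ g = g' := by
  rw [wreathBase_mul_wreathRight_eq_mk, wreathBase_mul_wreathRight_eq_mk]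
  exact SemidirectProduct.ext_iff.trans (by simp)

theorem wreathBase_mul_wreathRight_mul (w w' : H →₀ A) (g g' : H) :
    (wreathBase w * wreathRight g : WreathProd A H) * (wreathBase w' * wreathRight g') =
      wreathBase (w + wreathShift g w') * wreathRight (g * g') := by
  rw [wreathBase_mul_wreathRight_eq_mk, wreathBase_mul_wreathRight_eq_mk,
    wreathBase_mul_wreathRight_eq_mk]
  rfl

theorem wreathRight_one : (wreathRight 1 : WreathProd A H) = 1 := map_one _

theorem commute_wreathBase (w w' : H →₀ A) :
    Commute (wreathBase w : WreathProd A H) (wreathBase w') :=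
  (Commute.all (Multiplicative.ofAdd w) (Multiplicative.ofAdd w')).map _

end Wreath

theorem FreeGroup.mk_cons {I : Type*} (x : I × Bool) (L : List (I × Bool)) :
    FreeGroup.mk (x :: L) = FreeGroup.mk [x] * FreeGroup.mk L := by
  rw [FreeGroup.mul_mk, List.singleton_append]

theorem FreeGroup.mk_singleton_true {I : Type*} (i : I) :
    FreeGroup.mk [(i, true)] = FreeGroup.of i :=
  rfl

theorem FreeGroup.mk_singleton_false {I : Type*} (i : I) :
    FreeGroup.mk [(i, false)] = (FreeGroup.of i)⁻¹ := by
  rw [FreeGroup.of, FreeGroup.inv_mk]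
  rfl

section Magnus

variable {H : Type*} [Group H] {I : Type*} (h : I → H)

noncomputable def magnus : FreeGroup I →* WreathProd (I →₀ ℤ) H :=
  FreeGroup.lift fun i => wreathBase (single 1 (single i 1)) * wreathRight (h i)

noncomputable def magnusBase (u : FreeGroup I) : H →₀ (I →₀ ℤ) := wreathLeft (magnus h u)

theorem wreathRightHom_comp_magnus : wreathRightHom.comp (magnus h) = FreeGroup.lift h :=
  FreeGroup.ext_hom _ _ fun i => by
    rw [MonoidHom.comp_apply, magnus, FreeGroup.lift_apply_of, FreeGroup.lift_apply_of,
      wreathRightHom_wreathBase_mul_wreathRight]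

theorem magnus_eq (u : FreeGroup I) :
    magnus h u = wreathBase (magnusBase h u) * wreathRight (FreeGroup.lift h u) := by
  rw [← wreathRightHom_comp_magnus, MonoidHom.comp_apply]
  exact eq_wreathBase_mul_wreathRight _

theorem magnus_eq_iff {u : FreeGroup I} {w : H →₀ (I →₀ ℤ)} {g : H} :
    magnus h u = wreathBase w * wreathRight g ↔ magnusBase h u = w ∧ FreeGroup.lift h u = g := by
  rw [magnus_eq, wreathBase_mul_wreathRight_inj]

theorem magnus_eq_magnus_iff {u v : FreeGroup I} :
    magnus h u = magnus h v ↔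
      magnusBase h u = magnusBase h v ∧ FreeGroup.lift h u = FreeGroup.lift h v := by
  rw [magnus_eq h v, magnus_eq_iff]

theorem magnusBase_mul (u v : FreeGroup I) :
    magnusBase h (u * v) = magnusBase h u + wreathShift (FreeGroup.lift h u) (magnusBase h v) :=
  ((magnus_eq_iff h).1 (by rw [map_mul, magnus_eq, magnus_eq, wreathBase_mul_wreathRight_mul])).1

theorem magnusBase_one : magnusBase h 1 = 0 := by
  have h11 := magnusBase_mul h 1 1
  rw [one_mul, map_one, wreathShift_one] at h11
  exact left_eq_add.mp h11

theorem magnusBase_of (i : I) : magnusBase h (.of i) = single 1 (single i 1) :=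
  ((magnus_eq_iff h).1 (FreeGroup.lift_apply_of)).1

theorem magnusBase_of_inv (i : I) :
    magnusBase h (.of i)⁻¹ = single (h i) (single i (-1)) := by
  have h0 := magnusBase_mul h (.of i)⁻¹ (.of i)
  rw [inv_mul_cancel, magnusBase_one, magnusBase_of, map_inv, FreeGroup.lift_apply_of,
    wreathShift_single, one_mul, inv_inv] at h0
  rw [eq_neg_of_add_eq_zero_left h0.symm, single_neg, single_neg]

theorem wreathShift_magnusBase_mul (p : H) (u v : FreeGroup I) :
    wreathShift p (magnusBase h (u * v)) =
      wreathShift p (magnusBase h u) + wreathShift (p * FreeGroup.lift h u) (magnusBase h v) := by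
  rw [magnusBase_mul, map_add, wreathShift_wreathShift]

theorem isCocycle_wreathShift_magnusBase {A : Type*} [AddGroup A]
    (φ : (H →₀ (I →₀ ℤ)) →+ A) :
    IsCocycle (FreeGroup.lift h) fun p u => φ (wreathShift p (magnusBase h u)) := by
  intro p u v
  simp only [wreathShift_magnusBase_mul, map_add]

theorem baseNorm_magnusBase_mk_le (L : List (I × Bool)) :
    baseNorm (magnusBase h (.mk L)) ≤ L.length := by
  induction L with
  | nil => simp [← FreeGroup.one_eq_mk, magnusBase_one, baseNorm]
  | cons x L ih =>
    obtain ⟨s, c, hc, hx⟩ : ∃ s c, c.natAbs = 1 ∧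
        magnusBase h (.mk [x]) = single s (single x.1 c) := by
      obtain ⟨i, _ | _⟩ := x
      exacts [⟨h i, -1, rfl, by rw [FreeGroup.mk_singleton_false, magnusBase_of_inv]⟩,
        ⟨1, 1, rfl, by rw [FreeGroup.mk_singleton_true, magnusBase_of]⟩]
    have := baseNorm_add_single_single_le
      (wreathShift (FreeGroup.lift h (.mk [x])) (magnusBase h (.mk L))) s x.1 c
    rw [baseNorm_wreathShift, hc] at this
    rw [FreeGroup.mk_cons, magnusBase_mul, hx, add_comm, List.length_cons]
    omega

theorem magnus_eq_one_iff {u : FreeGroup I} :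
    magnus h u = 1 ↔ magnusBase h u = 0 ∧ FreeGroup.lift h u = 1 := by
  rw [← map_one (magnus h), magnus_eq_magnus_iff, magnusBase_one, map_one]

theorem commutator_ker_le_ker_magnus :
    ⁅(FreeGroup.lift h).ker, (FreeGroup.lift h).ker⁆ ≤ (magnus h).ker := by
  rw [Subgroup.commutator_le]
  intro a ha b hb
  rw [MonoidHom.mem_ker] at ha hb
  rw [MonoidHom.mem_ker, map_commutatorElement, commutatorElement_eq_one_iff_commute,
    magnus_eq, magnus_eq, ha, hb, wreathRight_one, mul_one, mul_one]
  exact commute_wreathBase _ _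

end Magnus

section Boundary

variable {H : Type*} [Group H] {I : Type*} (h : I → H)

noncomputable def cayleyBoundary : (H →₀ (I →₀ ℤ)) →+ (H →₀ ℤ) :=
  liftAddHom fun s => liftAddHom fun i =>
    zmultiplesHom _ (single s 1 - single ((h i)⁻¹ * s) 1)

theorem cayleyBoundary_single_single (s : H) (i : I) (k : ℤ) :
    cayleyBoundary h (single s (single i k)) = k • (single s 1 - single ((h i)⁻¹ * s) 1) := by
  rw [cayleyBoundary, liftAddHom_apply_single, liftAddHom_apply_single]
  rfl

theorem cayleyBoundary_apply [DecidableEq H] (w : H →₀ (I →₀ ℤ)) (a : H) :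
    cayleyBoundary h w a = w.sum fun s t => t.sum fun i k =>
      k * ((if s = a then 1 else 0) - if (h i)⁻¹ * s = a then 1 else 0) := by
  rw [cayleyBoundary, liftAddHom_apply, Finsupp.sum_apply]
  refine Finsupp.sum_congr fun s _ => ?_
  rw [liftAddHom_apply, Finsupp.sum_apply]
  refine Finsupp.sum_congr fun i _ => ?_
  rw [zmultiplesHom_apply, Finsupp.smul_apply, Finsupp.sub_apply, smul_eq_mul, single_apply,
    single_apply]

theorem cayleyBoundary_wreathShift_magnusBase (p : H) (u : FreeGroup I) :
    cayleyBoundary h (wreathShift p (magnusBase h u)) =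
      single p⁻¹ 1 - single (p * FreeGroup.lift h u)⁻¹ 1 := by
  have hcocycle : IsCocycle (FreeGroup.lift h)
      fun p u => (single p⁻¹ 1 - single (p * FreeGroup.lift h u)⁻¹ 1 : H →₀ ℤ) := by
    intro p u v
    dsimp only
    rw [map_mul, mul_assoc]
    abel
  refine congrFun (congrFun ((isCocycle_wreathShift_magnusBase h _).ext_of_freeGroup hcocycle
    fun p i => ?_) p) u
  rw [magnusBase_of, wreathShift_single, cayleyBoundary_single_single, one_smul, one_mul,
    FreeGroup.lift_apply_of, mul_inv_rev]

theorem exists_pos_or_neg_of_cayleyBoundary_pos {w : H →₀ (I →₀ ℤ)} {a : H}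
    (hpos : 0 < cayleyBoundary h w a) : ∃ i, 0 < w a i ∨ w (h i * a) i < 0 := by
  classical
  by_contra! hc
  refine hpos.not_ge ?_
  rw [cayleyBoundary_apply, Finsupp.sum]
  refine Finset.sum_nonpos fun s _ => ?_
  rw [Finsupp.sum]
  refine Finset.sum_nonpos fun i _ => ?_
  split_ifs with hsa hb hb
  · simp
  · subst hsa
    linarith [(hc i).1]
  · obtain rfl : s = h i * a := by rw [← hb, mul_inv_cancel_left]
    linarith [(hc i).2]
  · simp

theorem exists_baseNorm_sub_wreathShift_magnusBase {w : H →₀ (I →₀ ℤ)} {p : H}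
    (hpos : 0 < cayleyBoundary h w p⁻¹) :
    ∃ x : I × Bool,
      baseNorm (w - wreathShift p (magnusBase h (.mk [x]))) + 1 = baseNorm w := by
  obtain ⟨i, hi | hi⟩ := exists_pos_or_neg_of_cayleyBoundary_pos h hpos
  · refine ⟨(i, true), ?_⟩
    have := baseNorm_add_single_single w p⁻¹ i (-1)
    rw [FreeGroup.mk_singleton_true, magnusBase_of, wreathShift_single, one_mul, sub_eq_add_neg,
      ← single_neg, ← single_neg]
    omega
  · refine ⟨(i, false), ?_⟩
    have := baseNorm_add_single_single w (h i * p⁻¹) i 1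
    rw [FreeGroup.mk_singleton_false, magnusBase_of_inv, wreathShift_single, sub_eq_add_neg,
      ← single_neg, ← single_neg, neg_neg]
    omega

end Boundary

section Decomposition

variable {H : Type*} [Group H] {I : Type*} (h : I → H)

theorem exists_magnusBase_decomposition (w : H →₀ (I →₀ ℤ)) (p q : H)
    (hw : cayleyBoundary h w = single p⁻¹ 1 - single q⁻¹ 1) :
    ∃ (L : List (I × Bool)) (r : H →₀ (I →₀ ℤ)),
      w = wreathShift p (magnusBase h (.mk L)) + r ∧ baseNorm w = L.length + baseNorm r ∧
        p * FreeGroup.lift h (.mk L) = q := by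
  induction hn : baseNorm w using Nat.strong_induction_on generalizing w p with
  | _ n ih =>
  by_cases hpq : p = q
  · refine ⟨[], w, ?_, ?_, ?_⟩ <;>
      simp [← FreeGroup.one_eq_mk, magnusBase_one, hn, hpq]
  have hpos : 0 < cayleyBoundary h w p⁻¹ := by simp [hw, hpq]
  obtain ⟨x, hx⟩ := exists_baseNorm_sub_wreathShift_magnusBase h hpos
  obtain ⟨L, r, hwr, hnorm, hq⟩ := ih _ (by omega)
    (w - wreathShift p (magnusBase h (.mk [x]))) (p * FreeGroup.lift h (.mk [x]))
    (by rw [map_sub, hw, cayleyBoundary_wreathShift_magnusBase]; abel) rfl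
  refine ⟨x :: L, r, ?_, by simp; omega, by rw [← hq, FreeGroup.mk_cons, map_mul, mul_assoc]⟩
  rw [FreeGroup.mk_cons, wreathShift_magnusBase_mul, add_assoc, ← hwr]
  abel

theorem exists_magnusBase_eq_add (u : FreeGroup I) :
    ∃ (L : List (I × Bool)) (r : H →₀ (I →₀ ℤ)),
      magnusBase h u = magnusBase h (.mk L) + r ∧
        baseNorm (magnusBase h u) = L.length + baseNorm r ∧
          FreeGroup.lift h (.mk L) = FreeGroup.lift h u := by
  simpa using exists_magnusBase_decomposition h (magnusBase h u) 1 (FreeGroup.lift h u)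
    (by simpa using cayleyBoundary_wreathShift_magnusBase h 1 u)

theorem wordLength_le_baseNorm_magnusBase (u : FreeGroup I) :
    wordLength (Set.range h) (FreeGroup.lift h u) ≤ baseNorm (magnusBase h u) := by
  obtain ⟨L, r, -, hnorm, hL⟩ := exists_magnusBase_eq_add h u
  have := wordLength_lift_mk_le h L
  rw [hL] at this
  omega

theorem exists_mk_of_baseNorm_le_wordLength {u : FreeGroup I}
    (hu : baseNorm (magnusBase h u) ≤ wordLength (Set.range h) (FreeGroup.lift h u)) :
    ∃ L : List (I × Bool), L.length = baseNorm (magnusBase h u) ∧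
      magnus h (.mk L) = magnus h u := by
  obtain ⟨L, r, hwr, hnorm, hL⟩ := exists_magnusBase_eq_add h u
  have hlen := wordLength_lift_mk_le h L
  rw [hL] at hlen
  have hr : r = 0 := baseNorm_eq_zero_iff.1 (by omega)
  refine ⟨L, by omega, (magnus_eq_magnus_iff h).2 ⟨?_, hL⟩⟩
  rw [hwr, hr, add_zero]

end Decomposition

section KerClass

variable {G H : Type*} [Group G] [Group H] {ε : G →* H} (hε : Function.Surjective ε)

theorem mul_mul_inv_surjInv_mem_ker (p : H) (u : G) :
    Function.surjInv hε p * u * (Function.surjInv hε (p * ε u))⁻¹ ∈ ε.ker := by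
  simp [Function.surjInv_eq hε]

noncomputable def kerClass (p : H) (u : G) : Additive (Abelianization ε.ker) :=
  .ofMul (.of ⟨_, mul_mul_inv_surjInv_mem_ker hε p u⟩)

theorem isCocycle_kerClass : IsCocycle ε (kerClass hε) := by
  intro p u v
  rw [kerClass, kerClass, kerClass, ← ofMul_mul, ← map_mul]
  congr 2
  ext
  simp only [Subgroup.coe_mul, map_mul, mul_assoc, inv_mul_cancel_left]

theorem mem_commutator_of_kerClass_eq_zero {u : G} (hu : ε u = 1) (h0 : kerClass hε 1 u = 0) :
    u ∈ ⁅ε.ker, ε.ker⁆ := by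
  set s := Function.surjInv hε 1
  have hconj : s * u * s⁻¹ ∈ ⁅ε.ker, ε.ker⁆ := by
    rw [← Subgroup.map_subtype_commutator, ← Abelianization.ker_of]
    refine ⟨⟨s * u * s⁻¹, ?_⟩, ?_, rfl⟩
    · simp [hu]
    · exact MonoidHom.mem_ker.2 (by simpa [kerClass, hu, s] using h0)
  simpa [mul_assoc] using (Subgroup.commutator_normal _ _).conj_mem _ hconj s⁻¹

end KerClass

section MagnusKernel

variable {H : Type*} [Group H] {I : Type*} {h : I → H}

noncomputable def kerClassOfBase (hsurj : Function.Surjective (FreeGroup.lift h)) :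
    (H →₀ (I →₀ ℤ)) →+ Additive (Abelianization (FreeGroup.lift h).ker) :=
  liftAddHom fun s => liftAddHom fun i => zmultiplesHom _ (kerClass hsurj s⁻¹ (.of i))

theorem kerClass_eq_kerClassOfBase (hsurj : Function.Surjective (FreeGroup.lift h)) (p : H)
    (u : FreeGroup I) :
    kerClass hsurj p u = kerClassOfBase hsurj (wreathShift p (magnusBase h u)) := by
  refine congrFun (congrFun ((isCocycle_kerClass hsurj).ext_of_freeGroup
    (isCocycle_wreathShift_magnusBase h _) fun p i => ?_) p) u
  rw [magnusBase_of, wreathShift_single, one_mul, kerClassOfBase, liftAddHom_apply_single,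
    liftAddHom_apply_single, zmultiplesHom_apply, one_zsmul, inv_inv]

theorem ker_magnus_le_commutator (hsurj : Function.Surjective (FreeGroup.lift h)) :
    (magnus h).ker ≤ ⁅(FreeGroup.lift h).ker, (FreeGroup.lift h).ker⁆ := by
  intro u hu
  obtain ⟨h0, h1⟩ := (magnus_eq_one_iff h).1 hu
  refine mem_commutator_of_kerClass_eq_zero hsurj h1 ?_
  rw [kerClass_eq_kerClassOfBase, wreathShift_one, h0, map_zero]

end MagnusKernel

section Quotient

variable {I : Type*}

theorem lift_of_mk_quotient (K : Subgroup (FreeGroup I)) [K.Normal] :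
    FreeGroup.lift (fun i => ((FreeGroup.of i : FreeGroup I) : FreeGroup I ⧸ K)) =
      QuotientGroup.mk' K :=
  FreeGroup.ext_hom _ _ fun i => by simp

theorem wordLength_mk_quotient_le (K : Subgroup (FreeGroup I)) [K.Normal]
    (L : List (I × Bool)) :
    wordLength (Set.range fun i => ((FreeGroup.of i : FreeGroup I) : FreeGroup I ⧸ K))
      (FreeGroup.mk L : FreeGroup I ⧸ K) ≤ L.length := by
  simpa [lift_of_mk_quotient] using wordLength_lift_mk_le
    (fun i => ((FreeGroup.of i : FreeGroup I) : FreeGroup I ⧸ K)) L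

theorem closure_range_of_quotient (K : Subgroup (FreeGroup I)) [K.Normal] :
    Subgroup.closure (Set.range fun i => ((FreeGroup.of i : FreeGroup I) : FreeGroup I ⧸ K)) =
      ⊤ := by
  rw [← FreeGroup.lift_surjective_iff_closure_range_eq_top, lift_of_mk_quotient]
  exact QuotientGroup.mk'_surjective K

variable {H : Type*} [Group H] (h : I → H)

theorem magnus_eq_magnus_of_mk_eq_mk {u v : FreeGroup I}
    (huv : (u : FreeGroup I ⧸ ⁅(FreeGroup.lift h).ker, (FreeGroup.lift h).ker⁆) = v) :
    magnus h u = magnus h v := by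
  have := commutator_ker_le_ker_magnus h (QuotientGroup.eq.1 huv)
  rwa [MonoidHom.mem_ker, map_mul, map_inv, inv_mul_eq_one] at this

theorem mk_eq_mk_of_magnus_eq_magnus (hsurj : Function.Surjective (FreeGroup.lift h))
    {u v : FreeGroup I} (huv : magnus h u = magnus h v) :
    (u : FreeGroup I ⧸ ⁅(FreeGroup.lift h).ker, (FreeGroup.lift h).ker⁆) = v :=
  QuotientGroup.eq.2 (ker_magnus_le_commutator hsurj (by simp [huv]))

theorem baseNorm_magnusBase_le_wordLength_quotient (u : FreeGroup I) :
    baseNorm (magnusBase h u) ≤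
      wordLength
        (Set.range fun i => ((FreeGroup.of i : FreeGroup I) :
          FreeGroup I ⧸ ⁅(FreeGroup.lift h).ker, (FreeGroup.lift h).ker⁆))
        (u : FreeGroup I ⧸ ⁅(FreeGroup.lift h).ker, (FreeGroup.lift h).ker⁆) := by
  obtain ⟨L, hL, hLu⟩ := exists_length_eq_wordLength _ (closure_range_of_quotient _)
    (u : FreeGroup I ⧸ ⁅(FreeGroup.lift h).ker, (FreeGroup.lift h).ker⁆)
  rw [lift_of_mk_quotient, QuotientGroup.mk'_apply] at hLu
  rw [← hL, ← ((magnus_eq_magnus_iff h).1 (magnus_eq_magnus_of_mk_eq_mk h hLu)).1]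
  exact baseNorm_magnusBase_mk_le h L

end Quotient

/-- Let `μ : F → A ≀ H` be the Magnus homomorphism `μ(x_i) = a_i h_i` and `ε : F → H` the
canonical projection with kernel `N`. If `μ(f) = w·g`, then `|g|_X = ‖w‖` if and only if the
word lengths of the images of `f` in `H ≅ F/N` and in `F/[N,N]`, with respect to the images of
the basis `(x_i)`, coincide. -/
theorem magnus_word_length_eq_iff {H : Type} [Group H] {I : Type}
    (h : I → H) (hgen : Subgroup.closure (Set.range h) = ⊤)
    (f : FreeGroup I) (w : H →₀ (I →₀ ℤ)) (g : H)
    (hf : FreeGroup.lift (fun i => wreathBase (Finsupp.single (1 : H)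
            (Finsupp.single i (1 : ℤ))) * wreathRight (h i)) f
          = wreathBase w * wreathRight g) :
    wordLength (Set.range h) g = baseNorm w ↔
      wordLength (Set.range h) ((FreeGroup.lift h) f) =
        wordLength
          (Set.range fun i => ((FreeGroup.of i : FreeGroup I) :
            FreeGroup I ⧸ ⁅(FreeGroup.lift h).ker, (FreeGroup.lift h).ker⁆))
          ((f : FreeGroup I) : FreeGroup I ⧸ ⁅(FreeGroup.lift h).ker, (FreeGroup.lift h).ker⁆) := by
  obtain ⟨rfl, rfl⟩ := (magnus_eq_iff h).1 hf
  have hle := wordLength_le_baseNorm_magnusBase h f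
  have hle' := baseNorm_magnusBase_le_wordLength_quotient h f
  refine ⟨fun heq => le_antisymm (hle.trans hle') ?_, fun heq => by omega⟩
  obtain ⟨L, hL, hmagnus⟩ := exists_mk_of_baseNorm_le_wordLength h heq.ge
  have hsurj := FreeGroup.lift_surjective_iff_closure_range_eq_top.2 hgen
  calc _ ≤ L.length := by
        rw [← mk_eq_mk_of_magnus_eq_magnus h hsurj hmagnus]
        exact wordLength_mk_quotient_le _ L
    _ = _ := hL.trans heq.symm
end

section
/- Let M = ℤ ≀ ℤ be the restricted wreath product of two infinite cyclic groups, generated by S = {x₀, y₀}, where x₀ generates the copy of ℤ in the base at the identity and y₀ generates the acting copy of ℤ. Then there exist a parallelogram-free subset P ⊆ M and constants c > 1 and λ > 0 such that for every n ∈ ℕ, #{ w ∈ P : λ·|w|_S < n + 1 } ≥ cⁿ. In particular, the finitely generated metabelian group M contains a parallelogram-free subset of exponential growth. -/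
/-- `(u₁, u₂, u₃, u₄)` is a parallelogram: cyclically consecutive entries are distinct and
`u₁u₂⁻¹u₃u₄⁻¹ = 1`. -/
def IsParallelogram {G : Type*} [Group G] (u₁ u₂ u₃ u₄ : G) : Prop :=
  u₁ ≠ u₂ ∧ u₂ ≠ u₃ ∧ u₃ ≠ u₄ ∧ u₄ ≠ u₁ ∧ u₁ * u₂⁻¹ * u₃ * u₄⁻¹ = 1

/-- A subset `P` of a group is parallelogram-free if it contains no parallelogram. -/
def ParallelogramFree {G : Type*} [Group G] (P : Set G) : Prop :=
  ¬ ∃ u₁ u₂ u₃ u₄ : G, u₁ ∈ P ∧ u₂ ∈ P ∧ u₃ ∈ P ∧ u₄ ∈ P ∧ IsParallelogram u₁ u₂ u₃ u₄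

/-- The wreath product `M = ℤ ≀ ℤ`. -/
noncomputable abbrev LampLighter : Type := WreathProd ℤ (Multiplicative ℤ)

/-- The generator of the copy of `ℤ` in the base of `ℤ ≀ ℤ` located at the identity. -/
noncomputable def llx : LampLighter := wreathBase (Finsupp.single (1 : Multiplicative ℤ) (1 : ℤ))

/-- The generator of the acting copy of `ℤ` in `ℤ ≀ ℤ`. -/
noncomputable def lly : LampLighter := wreathRight (Multiplicative.ofAdd (1 : ℤ))

/-!
Over `𝔽₃[X]` the set `{(x, x²)}` has no nontrivial additive parallelogram: if `a + c = b + d`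
and `a² + c² = b² + d²` then `2 (a - b) (a - d) = 0`. Writing the coefficients of `x` and `x²`,
as integers `0, 1, 2`, on the even and odd lamps of `ℤ ≀ ℤ` places this set in the abelian base;
a parallelogram among such lamp configurations reduces mod 3 to one of pairs `(x, x²)`, so the
image is parallelogram-free. A polynomial of degree `< n` only uses the lamps `0, …, 4n - 1`,
which the lamplighter switches in at most `16 n` steps, so all `3ⁿ` of them lie in the ball of
radius `16 n`.
-/

section WordLength

variable {G : Type*} [Group G] {X : Set G}

lemma wordLength_le_length {l : List G} (hl : ∀ x ∈ l, x ∈ X ∨ x⁻¹ ∈ X) :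
    wordLength X l.prod ≤ l.length :=
  Nat.sInf_le ⟨l, rfl, hl, rfl⟩

lemma exists_word_length_eq_wordLength (hX : Subgroup.closure X = ⊤) (g : G) :
    ∃ l : List G, l.length = wordLength X g ∧ (∀ x ∈ l, x ∈ X ∨ x⁻¹ ∈ X) ∧ l.prod = g := by
  have hg : g ∈ (Subgroup.closure X).toSubmonoid := by simp [hX]
  rw [Subgroup.closure_toSubmonoid] at hg
  obtain ⟨l, hl, hprod⟩ := Submonoid.exists_list_of_mem_closure hg
  exact Nat.sInf_mem (s := {n | ∃ l : List G, l.length = n ∧ (∀ x ∈ l, x ∈ X ∨ x⁻¹ ∈ X) ∧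
    l.prod = g}) ⟨l.length, l, rfl, fun x hx => (hl x hx).imp id Set.mem_inv.mp, hprod⟩

lemma wordLength_mul_le (hX : Subgroup.closure X = ⊤) (g h : G) :
    wordLength X (g * h) ≤ wordLength X g + wordLength X h := by
  obtain ⟨l₁, hlen₁, hl₁, rfl⟩ := exists_word_length_eq_wordLength hX g
  obtain ⟨l₂, hlen₂, hl₂, rfl⟩ := exists_word_length_eq_wordLength hX h
  rw [← hlen₁, ← hlen₂, ← List.length_append, ← List.prod_append]
  exact wordLength_le_length fun x hx => (List.mem_append.mp hx).elim (hl₁ x) (hl₂ x)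

lemma wordLength_le_one {x : G} (hx : x ∈ X ∨ x⁻¹ ∈ X) : wordLength X x ≤ 1 := by
  simpa using wordLength_le_length (X := X) (l := [x]) (by simpa using hx)

lemma wordLength_zpow_le {x : G} (hx : x ∈ X) (c : ℤ) : wordLength X (x ^ c) ≤ c.natAbs := by
  obtain ⟨n, rfl | rfl⟩ := Int.eq_nat_or_neg c
  · simpa using wordLength_le_length (X := X) (l := .replicate n x) fun y hy =>
      .inl (List.eq_of_mem_replicate hy ▸ hx)
  · simpa using wordLength_le_length (X := X) (l := .replicate n x⁻¹) fun y hy =>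
      .inr (by rwa [List.eq_of_mem_replicate hy, inv_inv])

lemma finite_setOf_wordLength_le (hXfin : X.Finite) (hX : Subgroup.closure X = ⊤) (L : ℕ) :
    {g | wordLength X g ≤ L}.Finite := by
  let Y := X ∪ X⁻¹
  have : Finite Y := (hXfin.union hXfin.inv).to_subtype
  refine ((List.finite_length_le Y L).image fun l => (l.map Subtype.val).prod).subset ?_
  intro g hg
  obtain ⟨l, hlen, hl, rfl⟩ := exists_word_length_eq_wordLength hX g
  refine ⟨l.attach.map fun x => ⟨x.1, hl x.1 x.2⟩, by simpa [hlen] using hg, ?_⟩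
  simp [List.map_map, Function.comp_def]

lemma finite_setOf_mul_wordLength_lt (hXfin : X.Finite) (hX : Subgroup.closure X = ⊤) {lam : ℝ}
    (hlam : 0 < lam) (r : ℝ) : {g | lam * wordLength X g < r}.Finite :=
  (finite_setOf_wordLength_le hXfin hX ⌊r / lam⌋₊).subset fun _ hg =>
    Nat.le_floor ((le_div_iff₀' hlam).mpr (le_of_lt hg))

end WordLength

section WreathProd

variable {A : Type*} [AddCommGroup A] {H : Type*} [Group H]

lemma wreathBase_add (v w : H →₀ A) :
    (wreathBase (v + w) : WreathProd A H) = wreathBase v * wreathBase w :=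
  map_mul (SemidirectProduct.inl (φ := wreathAction H A)) (.ofAdd v) (.ofAdd w)

lemma wreathBase_zero : (wreathBase 0 : WreathProd A H) = 1 :=
  map_one (SemidirectProduct.inl (φ := wreathAction H A))

lemma wreathBase_neg (v : H →₀ A) : (wreathBase (-v) : WreathProd A H) = (wreathBase v)⁻¹ :=
  map_inv (SemidirectProduct.inl (φ := wreathAction H A)) (.ofAdd v)

lemma wreathBase_zsmul (c : ℤ) (v : H →₀ A) :
    (wreathBase (c • v) : WreathProd A H) = wreathBase v ^ c :=
  map_zpow (SemidirectProduct.inl (φ := wreathAction H A)) (.ofAdd v) c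

lemma wreathBase_injective : Function.Injective (wreathBase : (H →₀ A) → WreathProd A H) :=
  SemidirectProduct.inl_injective.comp Multiplicative.ofAdd.injective

lemma wreathRight_zpow (b : H) (c : ℤ) :
    (wreathRight (b ^ c) : WreathProd A H) = wreathRight b ^ c :=
  map_zpow (SemidirectProduct.inr (φ := wreathAction H A)) b c

lemma wreathRight_mul_wreathBase_mul_inv (b : H) (f : H →₀ A) :
    (wreathRight b * wreathBase f * (wreathRight b)⁻¹ : WreathProd A H) =
      wreathBase (wreathShift b f) := by
  have h := SemidirectProduct.inl_aut (φ := wreathAction H A) b (.ofAdd f)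
  rw [map_inv] at h
  exact h.symm

lemma wreathBase_mul_wreathRight_surjective :
    Function.Surjective fun p : (H →₀ A) × H =>
      (wreathBase p.1 * wreathRight p.2 : WreathProd A H) :=
  fun g => ⟨(g.left.toAdd, g.right), SemidirectProduct.inl_left_mul_inr_right g⟩

lemma wreathShift_single_s12 (b j : H) (a : A) :
    wreathShift b (Finsupp.single j a) = Finsupp.single (j * b⁻¹) a := by
  simp [wreathShift]

end WreathProd

lemma SemidirectProduct.derivedSeries_two_eq_bot {N G : Type*} [CommGroup N] [CommGroup G]
    (φ : G →* MulAut N) : derivedSeries (N ⋊[φ] G) 2 = ⊥ := by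
  have hder : derivedSeries (N ⋊[φ] G) 1 ≤ (inl : N →* N ⋊[φ] G).range := by
    rw [derivedSeries_one, range_inl_eq_ker_rightHom]
    exact Abelianization.commutator_subset_ker rightHom
  rw [derivedSeries_succ, eq_bot_iff]
  refine (Subgroup.commutator_mono hder hder).trans ?_
  rw [MonoidHom.range_eq_map, ← Subgroup.map_commutator, ← commutator_def, commutator_eq_bot,
    Subgroup.map_bot]

lemma derivedSeries_wreathProd_two_eq_bot (A : Type*) [AddCommGroup A] (H : Type*) [CommGroup H] :
    derivedSeries (WreathProd A H) 2 = ⊥ :=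
  SemidirectProduct.derivedSeries_two_eq_bot _

lemma llx_zpow (c : ℤ) : llx ^ c = wreathBase (Finsupp.single 1 c) := by
  rw [llx, ← wreathBase_zsmul, Finsupp.smul_single_one]

lemma lly_zpow (k : ℤ) : lly ^ k = wreathRight (Multiplicative.ofAdd k) := by
  rw [lly, ← wreathRight_zpow, ← ofAdd_zsmul, smul_eq_mul, mul_one]

lemma closure_llx_lly : Subgroup.closure ({llx, lly} : Set LampLighter) = ⊤ := by
  set C := Subgroup.closure ({llx, lly} : Set LampLighter)
  have hright (t : Multiplicative ℤ) : wreathRight t ∈ C := by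
    rw [← ofAdd_toAdd t, ← lly_zpow]
    exact zpow_mem (Subgroup.subset_closure (by simp)) _
  have hsingle (j : Multiplicative ℤ) (a : ℤ) : wreathBase (Finsupp.single j a) ∈ C := by
    rw [show Finsupp.single j a = wreathShift j⁻¹ (Finsupp.single 1 a) by simp [wreathShift_single_s12],
      ← wreathRight_mul_wreathBase_mul_inv, ← llx_zpow]
    exact mul_mem (mul_mem (hright _) (zpow_mem (Subgroup.subset_closure (by simp)) _))
      (inv_mem (hright _))
  have hbase (f : Multiplicative ℤ →₀ ℤ) : wreathBase f ∈ C := by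
    induction f using Finsupp.induction with
    | zero => rw [wreathBase_zero]; exact one_mem C
    | single_add j a f _ _ ih => rw [wreathBase_add]; exact mul_mem (hsingle j a) ih
  rw [eq_top_iff]
  rintro g -
  obtain ⟨⟨f, t⟩, rfl⟩ := wreathBase_mul_wreathRight_surjective g
  exact mul_mem (hbase f) (hright t)

lemma wreathBase_eq_llx_zpow_mul_conj (f : Multiplicative ℤ →₀ ℤ) :
    wreathBase f = llx ^ f 1 *
      (lly⁻¹ * wreathBase (wreathShift (.ofAdd 1) (f.erase 1)) * lly) := by
  have hshift : wreathShift (.ofAdd (-1)) (wreathShift (.ofAdd 1) (f.erase 1)) = f.erase 1 := by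
    ext x
    simp [mul_assoc]
  have hinv : lly⁻¹ = wreathRight (.ofAdd (-1)) := by rw [← zpow_neg_one, lly_zpow]
  rw [hinv, ← inv_inv lly, hinv, wreathRight_mul_wreathBase_mul_inv, hshift, llx_zpow,
    ← wreathBase_add, Finsupp.single_add_erase]

lemma wordLength_wreathBase_le {K : ℕ} (m : ℕ) {f : Multiplicative ℤ →₀ ℤ}
    (hK : ∀ z, (f z).natAbs ≤ K) (hsupp : ∀ i : ℤ, f (.ofAdd i) ≠ 0 → i ∈ Set.Ico 0 (m : ℤ)) :
    wordLength ({llx, lly} : Set LampLighter) (wreathBase f) ≤ (K + 2) * m := by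
  induction m generalizing f with
  | zero =>
    have hf : f = 0 := by
      ext z
      by_contra hz
      have := Set.mem_Ico.mp (hsupp z.toAdd hz)
      omega
    rw [hf, wreathBase_zero, Nat.mul_zero]
    simpa using wordLength_le_length (X := ({llx, lly} : Set LampLighter)) (l := []) (by simp)
  | succ m ih =>
    set g := wreathShift (.ofAdd 1) (f.erase 1)
    have hg : ∀ z, g z = if z * .ofAdd 1 = 1 then 0 else f (z * .ofAdd 1) := by
      intro z; simp [g, Finsupp.erase_apply]
    have hgK : ∀ z, (g z).natAbs ≤ K := by
      intro z; rw [hg]; split_ifs <;> simp [hK]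
    have hgsupp : ∀ i : ℤ, g (.ofAdd i) ≠ 0 → i ∈ Set.Ico 0 (m : ℤ) := by
      intro i hi
      rw [hg, ← ofAdd_add] at hi
      split_ifs at hi with h0
      · exact absurd rfl hi
      · have := Set.mem_Ico.mp (hsupp _ hi)
        have : i + 1 ≠ 0 := fun h => h0 (by simp [h])
        exact Set.mem_Ico.mpr (by omega)
    have hX : Subgroup.closure ({llx, lly} : Set LampLighter) = ⊤ := closure_llx_lly
    rw [wreathBase_eq_llx_zpow_mul_conj]
    calc _ ≤ (f 1).natAbs + (1 + (K + 2) * m + 1) := by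
          refine (wordLength_mul_le hX _ _).trans (add_le_add (wordLength_zpow_le (by simp) _) ?_)
          refine (wordLength_mul_le hX _ _).trans (add_le_add ?_ (wordLength_le_one (by simp)))
          exact (wordLength_mul_le hX _ _).trans
            (add_le_add (wordLength_le_one (by simp)) (ih hgK hgsupp))
      _ ≤ (K + 2) * (m + 1) := by nlinarith [hK 1]

lemma eq_or_eq_of_add_eq_add_of_sq_add_sq_eq {R : Type*} [CommRing R] [NoZeroDivisors R]
    (h2 : (2 : R) ≠ 0) {a b c d : R} (h : a + c = b + d) (hsq : a ^ 2 + c ^ 2 = b ^ 2 + d ^ 2) :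
    a = b ∨ a = d := by
  have hprod : 2 * ((a - b) * (a - d)) = 0 := by linear_combination hsq - (b + c + d - a) * h
  simpa [h2, sub_eq_zero] using hprod

open Polynomial

lemma Polynomial.natCard_degreeLT (R : Type*) [Semiring R] (n : ℕ) :
    Nat.card (degreeLT R n) = Nat.card R ^ n := by
  rw [Nat.card_congr (degreeLTEquiv R n).toEquiv, Nat.card_fun, Nat.card_fin]

lemma Polynomial.degree_pow_lt_of_degree_lt {R : Type*} [Semiring R] {x : R[X]} {n k : ℕ}
    (hk : k ≠ 0) (hx : x.degree < n) : (x ^ k).degree < ↑(k * n) := by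
  rcases eq_or_ne x 0 with rfl | hx0
  · rw [zero_pow hk, degree_zero]; exact WithBot.bot_lt_coe _
  rw [degree_eq_natDegree hx0, Nat.cast_lt] at hx
  refine degree_le_natDegree.trans_lt (Nat.cast_lt.mpr ?_)
  calc (x ^ k).natDegree ≤ k * x.natDegree := natDegree_pow_le
    _ < k * n := Nat.mul_lt_mul_of_pos_left hx (Nat.pos_of_ne_zero hk)

noncomputable def interleave : ℕ ⊕ ℕ ↪ Multiplicative ℤ :=
  ⟨Sum.elim (fun k => .ofAdd (2 * k : ℤ)) (fun k => .ofAdd (2 * k + 1 : ℤ)),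
    .sumElim (fun i j h => by have := Multiplicative.ofAdd.injective h; omega)
      (fun i j h => by have := Multiplicative.ofAdd.injective h; omega)
      (fun i j h => by have := Multiplicative.ofAdd.injective h; omega)⟩

noncomputable def squareLamps (x : (ZMod 3)[X]) : Multiplicative ℤ →₀ ℤ :=
  Finsupp.embDomain interleave <|
    (Finsupp.sumElim x.toFinsupp.coeff (x ^ 2).toFinsupp.coeff).mapRange (fun a => (a.val : ℤ))
      (by simp)

lemma squareLamps_interleave_inl (x : (ZMod 3)[X]) (k : ℕ) :
    squareLamps x (interleave (.inl k)) = (x.coeff k).val := by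
  simp only [squareLamps, Finsupp.embDomain_apply_self, Finsupp.mapRange_apply, Finsupp.sumElim_inl]
  rfl

lemma squareLamps_interleave_inr (x : (ZMod 3)[X]) (k : ℕ) :
    squareLamps x (interleave (.inr k)) = ((x ^ 2).coeff k).val := by
  simp only [squareLamps, Finsupp.embDomain_apply_self, Finsupp.mapRange_apply, Finsupp.sumElim_inr]
  rfl

lemma intCast_squareLamps_interleave_inl (x : (ZMod 3)[X]) (k : ℕ) :
    ((squareLamps x (interleave (.inl k)) : ℤ) : ZMod 3) = x.coeff k := by
  simp [squareLamps_interleave_inl]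

lemma intCast_squareLamps_interleave_inr (x : (ZMod 3)[X]) (k : ℕ) :
    ((squareLamps x (interleave (.inr k)) : ℤ) : ZMod 3) = (x ^ 2).coeff k := by
  simp [squareLamps_interleave_inr]

lemma squareLamps_injective : Function.Injective squareLamps := fun a b h => by
  ext k
  simpa [intCast_squareLamps_interleave_inl] using
    congrArg (fun f => ((f (interleave (.inl k)) : ℤ) : ZMod 3)) h

lemma eq_or_eq_of_squareLamps_add_eq_add {a b c d : (ZMod 3)[X]}
    (h : squareLamps a + squareLamps c = squareLamps b + squareLamps d) : a = b ∨ a = d := by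
  have hmod (s : ℕ ⊕ ℕ) := congrArg (fun f => ((f (interleave s) : ℤ) : ZMod 3)) h
  refine eq_or_eq_of_add_eq_add_of_sq_add_sq_eq (c := c) ?_ ?_ ?_
  · rw [← C_ofNat, Ne, C_eq_zero]; decide
  · ext k; simpa [intCast_squareLamps_interleave_inl] using hmod (.inl k)
  · ext k; simpa [intCast_squareLamps_interleave_inr] using hmod (.inr k)

lemma natAbs_squareLamps_le (x : (ZMod 3)[X]) (z : Multiplicative ℤ) :
    (squareLamps x z).natAbs ≤ 2 := by
  by_cases hz : z ∈ Set.range interleave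
  · obtain ⟨k | k, rfl⟩ := hz
    · rw [squareLamps_interleave_inl]; have := (x.coeff k).val_lt; omega
    · rw [squareLamps_interleave_inr]; have := ((x ^ 2).coeff k).val_lt; omega
  · rw [squareLamps, Finsupp.embDomain_of_notMem_range _ _ _ hz]; simp

lemma mem_Ico_of_squareLamps_ne_zero {x : (ZMod 3)[X]} {n : ℕ} (hx : x.degree < n) (i : ℤ)
    (hi : squareLamps x (.ofAdd i) ≠ 0) : i ∈ Set.Ico 0 ((4 * n : ℕ) : ℤ) := by
  rw [Set.mem_Ico]
  by_cases hz : Multiplicative.ofAdd i ∈ Set.range interleave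
  · obtain ⟨k | k, hk⟩ := hz
    · rw [← hk, squareLamps_interleave_inl] at hi
      have : k < n := by
        by_contra! hkn
        exact hi (by simp [coeff_eq_zero_of_degree_lt (hx.trans_le (by exact_mod_cast hkn))])
      have := Multiplicative.ofAdd.injective hk
      omega
    · rw [← hk, squareLamps_interleave_inr] at hi
      have : k < 2 * n := by
        by_contra! hkn
        exact hi (by simp [coeff_eq_zero_of_degree_lt
          ((degree_pow_lt_of_degree_lt two_ne_zero hx).trans_le (by exact_mod_cast hkn))])
      have := Multiplicative.ofAdd.injective hk
      omega
  · exact absurd (Finsupp.embDomain_of_notMem_range _ _ _ hz) hi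

noncomputable def squareLampSet : Set LampLighter := Set.range fun x => wreathBase (squareLamps x)

lemma parallelogramFree_squareLampSet : ParallelogramFree squareLampSet := by
  rintro ⟨_, _, _, _, ⟨a, rfl⟩, ⟨b, rfl⟩, ⟨c, rfl⟩, ⟨d, rfl⟩, hab, -, -, hda, h⟩
  rw [← wreathBase_neg, ← wreathBase_neg, ← wreathBase_add, ← wreathBase_add, ← wreathBase_add,
    ← wreathBase_zero] at h
  have h0 := wreathBase_injective h
  have hsum : squareLamps a + squareLamps c = squareLamps b + squareLamps d := by
    rw [← sub_eq_zero, ← h0]; abel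
  rcases eq_or_eq_of_squareLamps_add_eq_add hsum with rfl | rfl
  · exact hab rfl
  · exact hda rfl

lemma wordLength_squareLamps_le {x : (ZMod 3)[X]} {n : ℕ} (hx : x.degree < n) :
    wordLength ({llx, lly} : Set LampLighter) (wreathBase (squareLamps x)) ≤ 16 * n :=
  (wordLength_wreathBase_le (4 * n) (natAbs_squareLamps_le x)
    (mem_Ico_of_squareLamps_ne_zero hx)).trans_eq (by ring)

/-- The finitely generated metabelian group `M = ℤ ≀ ℤ`, with generating set `S = {x₀, y₀}`,
contains a parallelogram-free subset of exponential growth: there are `P ⊆ M`, `c > 1` and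
`λ > 0` with `#{w ∈ P : λ|w|_S < n + 1} ≥ cⁿ` for all `n`. -/
theorem lamplighter_parallelogramFree_exponential_growth :
    Subgroup.closure ({llx, lly} : Set LampLighter) = ⊤ ∧
    derivedSeries LampLighter 2 = ⊥ ∧
    ∃ (P : Set LampLighter) (c lam : ℝ), ParallelogramFree P ∧ 1 < c ∧ 0 < lam ∧
      ∀ n : ℕ, c ^ n ≤
        (Nat.card {w : LampLighter //
          w ∈ P ∧ lam * (wordLength ({llx, lly} : Set LampLighter) w : ℝ) < n + 1} : ℝ) := by
  refine ⟨closure_llx_lly, derivedSeries_wreathProd_two_eq_bot _ _, squareLampSet, 3, 1 / 16,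
    parallelogramFree_squareLampSet, by norm_num, by norm_num, fun n => ?_⟩
  have : Finite {w : LampLighter // w ∈ squareLampSet ∧
      1 / 16 * (wordLength ({llx, lly} : Set LampLighter) w : ℝ) < n + 1} :=
    ((finite_setOf_mul_wordLength_lt (by simp) closure_llx_lly (by norm_num) _).subset
      fun _ hw => hw.2).to_subtype
  have hlen (x : degreeLT (ZMod 3) n) :
      1 / 16 * (wordLength ({llx, lly} : Set LampLighter) (wreathBase (squareLamps x)) : ℝ) <
        n + 1 := by
    have : (wordLength ({llx, lly} : Set LampLighter) (wreathBase (squareLamps x)) : ℝ) ≤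
        16 * n := by exact_mod_cast wordLength_squareLamps_le (mem_degreeLT.mp x.2)
    linarith
  calc (3 : ℝ) ^ n = Nat.card (degreeLT (ZMod 3) n) := by simp [natCard_degreeLT]
    _ ≤ _ := Nat.cast_le.mpr <| Nat.card_le_card_of_injective (fun x => ⟨_, ⟨x, rfl⟩, hlen x⟩)
      fun x y h => Subtype.val_injective <|
        squareLamps_injective (wreathBase_injective (congrArg Subtype.val h))
end

section
/- Let T be a set, H a group, and (f_i)_{i∈I} an arbitrary family of functions T → H, each having finite range, regarded as elements of the Cartesian power H^T with pointwise multiplication. Then the subgroup ⟨ f_i : i ∈ I ⟩ of H^T belongs to the class E(H); that is, every finitely generated subgroup of ⟨ f_i : i ∈ I ⟩ embeds into a direct power H^r for some r ∈ ℕ. -/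
/-- `K` belongs to the class `E(H)`: every finitely generated subgroup of `K` embeds into a
finite direct power of `H`. -/
def InClassE (H : Type*) [Group H] (K : Type*) [Group K] : Prop :=
  ∀ S : Subgroup K, S.FG → ∃ (n : ℕ) (φ : ↥S →* (Fin n → H)), Function.Injective φ

/-!
Each element of the subgroup has finite range, since finite-range functions form a subgroup of
`H^T`. If `S` is generated by finitely many `g₁, …, gₖ`, the map `e : t ↦ (g₁ t, …, gₖ t)` thus
takes finitely many values, and every element of `S` is constant on the fibres of `e`. Evaluating
at one point of each fibre therefore embeds `S` into `H^(range e)`.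
-/

open Function Set

variable {T H : Type*} [Group H]

variable (T H) in
def finiteRangeSubgroup : Subgroup (T → H) where
  carrier := {g | (range g).Finite}
  one_mem' := finite_range_const
  mul_mem' {g g'} hg hg' := (hg.mul hg').subset <| by
    rintro _ ⟨t, rfl⟩
    exact mul_mem_mul ⟨t, rfl⟩ ⟨t, rfl⟩
  inv_mem' {g} hg := (hg.image Inv.inv).subset <| by
    rintro _ ⟨t, rfl⟩
    exact ⟨g t, ⟨t, rfl⟩, rfl⟩

variable (H) in
def factorsThroughSubgroup {Y : Type*} (e : T → Y) : Subgroup (T → H) where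
  carrier := {g | g.FactorsThrough e}
  one_mem' _ _ _ := rfl
  mul_mem' hg hg' _ _ h := congr_arg₂ (· * ·) (hg h) (hg' h)
  inv_mem' hg _ _ h := congr_arg Inv.inv (hg h)

lemma exists_injective_pi_fin_of_injective {K α : Type*} [Group K] [Finite α]
    (φ : K →* (α → H)) (hφ : Injective φ) :
    ∃ (n : ℕ) (ψ : K →* (Fin n → H)), Injective ψ := by
  obtain ⟨n, ⟨σ⟩⟩ := Finite.exists_equiv_fin α
  let reindex : (α → H) ≃* (Fin n → H) := MulEquiv.arrowCongr σ (MulEquiv.refl H)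
  exact ⟨n, reindex.toMonoidHom.comp φ, reindex.injective.comp hφ⟩

lemma exists_injective_pi_fin_of_factorsThrough {K Y : Type*} [Group K] (ι : K →* (T → H))
    (hι : Injective ι) {e : T → Y} (he : (range e).Finite)
    (hfac : ∀ k, ι k ∈ factorsThroughSubgroup H e) :
    ∃ (n : ℕ) (ψ : K →* (Fin n → H)), Injective ψ := by
  have := he.to_subtype
  let σ : range e → T := fun y => y.2.choose
  have hσ (y : range e) : e (σ y) = y := y.2.choose_spec
  let restrict : K →* (range e → H) := MonoidHom.pi fun y => (Pi.evalMonoidHom _ (σ y)).comp ι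
  refine exists_injective_pi_fin_of_injective restrict ((injective_iff_map_eq_one _).2 ?_)
  intro k hk
  refine hι (funext fun t => ?_)
  calc ι k t = ι k (σ ⟨e t, t, rfl⟩) := hfac k (hσ ⟨e t, t, rfl⟩).symm
    _ = 1 := congrFun hk _
    _ = ι 1 t := by simp

/-- If `(f_i)_{i ∈ I}` is a family of functions `T → H` with finite range, regarded as elements
of the Cartesian power `H^T`, then the subgroup they generate belongs to `E(H)`. -/
theorem subgroup_generated_by_finite_range_functions_in_E
    {T : Type} {H : Type} [Group H] {I : Type} (f : I → (T → H))
    (hfin : ∀ i, (Set.range (f i)).Finite) :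
    InClassE H ↥(Subgroup.closure (Set.range f) : Subgroup (T → H)) := by
  set G := Subgroup.closure (Set.range f)
  rintro S ⟨F, rfl⟩
  have hG_finiteRange : G ≤ finiteRangeSubgroup T H := (Subgroup.closure_le _).2 <| by
    rintro _ ⟨i, rfl⟩
    exact hfin i
  let e : T → (F → H) := fun t g => (g : G).1 t
  have he : (range e).Finite := (Set.Finite.pi fun g : F => hG_finiteRange (g : G).2).subset <| by
    rintro _ ⟨t, rfl⟩ g -
    exact ⟨t, rfl⟩
  have hS_factors : Subgroup.closure (F : Set G) ≤ (factorsThroughSubgroup H e).comap G.subtype :=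
    (Subgroup.closure_le _).2 fun g hg _ _ h => congrFun h ⟨g, hg⟩
  exact exists_injective_pi_fin_of_factorsThrough (G.subtype.comp (Subgroup.closure _).subtype)
    (Subtype.val_injective.comp Subtype.val_injective) he fun k => hS_factors k.2
end
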